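/- arXiv:math/0612127 — 11 statements merged into one kernel-verified Lean document; each statement's English description precedes it below -/
import Mathlib

section
/- Let n ≥ 2 and let P be an active Dyck path of semilength n. Then every element of θ(P) is again a Dyck path of semilength n. -/
open List DyckStep


/-- The pyramid `p_n = U^n D^n`. -/
def pyr (n : ℕ) : List DyckStep := replicate n U ++ replicate n D

/-- A word is *active* if every proper nonempty prefix contains strictly more `U`s than `D`s. -/
def IsActive (w : List DyckStep) : Prop :=
  ∀ i, 0 < i → i < w.length → (w.take i).count D < (w.take i).count U

/-- The length of the last descent (maximal final run of `D`s). -/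
def lastDescentLen (w : List DyckStep) : ℕ := (w.reverse.takeWhile (· == D)).length

/-- The length of the last ascent (run of `U`s immediately preceding the last descent). -/
def lastAscentLen (w : List DyckStep) : ℕ :=
  ((w.reverse.dropWhile (· == D)).takeWhile (· == U)).length

/-- The word with its trailing `D`s removed. -/
def stripD (w : List DyckStep) : List DyckStep := (w.reverse.dropWhile (· == D)).reverse

/-- The inner of a word: the word with its first and its last letter removed. -/
def inner (w : List DyckStep) : List DyckStep := w.dropLast.tail

/-- The operator `θ`.  For an active `P = U·Q·D` with `Q = R·D^m` (`R` not ending in `D`),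
`θ(P) = { R·D^(m-j)·U·D^(j+1) : 0 ≤ j ≤ m }`, where moreover `j = m` is excluded if `P` is
the pyramid; `θ(P) = ∅` if `P` is not active. -/
def theta (P : List DyckStep) : Set (List DyckStep) :=
  { Y | IsActive P ∧ ∃ j ≤ lastDescentLen (inner P),
      (P = pyr (P.count U) → j < lastDescentLen (inner P)) ∧
      Y = stripD (inner P) ++
        (replicate (lastDescentLen (inner P) - j) D ++ (U :: replicate (j + 1) D)) }

/-- Auxiliary: remove the first occurrence of the factor `DU`. -/
def removeFirstDU : List DyckStep → List DyckStep
  | .D :: .U :: rest => rest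
  | x :: rest => x :: removeFirstDU rest
  | [] => []

/-- `τ`: delete the rightmost peak (last occurrence of the factor `UD`),
then prepend a `U` and append a `D`. -/
def tau (w : List DyckStep) : List DyckStep :=
  U :: ((removeFirstDU w.reverse).reverse ++ [D])

/-- The number of peaks (occurrences of the factor `UD`). -/
def numPeaks (w : List DyckStep) : ℕ :=
  ((w.zip w.tail).filter (fun p => p.1 == U && p.2 == D)).length

/-- Auxiliary: swap the first occurrence of the factor `DU` into `UD`. -/
def swapFirstDU : List DyckStep → List DyckStep
  | .D :: .U :: rest => .U :: .D :: rest
  | x :: rest => x :: swapFirstDU rest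
  | [] => []

/-- Overturn the rightmost peak: replace the last occurrence of the factor `UD` by `DU`. -/
def overturnLastPeak (w : List DyckStep) : List DyckStep := (swapFirstDU w.reverse).reverse

/-- The word with its trailing `U`s removed. -/
def stripU (w : List DyckStep) : List DyckStep := (w.reverse.dropWhile (· == U)).reverse

/-- The length of the final run of `U`s. -/
def trailU (w : List DyckStep) : ℕ := (w.reverse.takeWhile (· == U)).length

/-- `op3`: for `P = S·U^a·D^b·U·D` (`S` not ending in `U`, `a, b ≥ 1`), remove the final
pyramid `p_1 = UD`, prepend a `U` and insert a `D` immediately before the last `U` of the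
last ascent, giving `U·S·U^(a-1)·D·U·D^b`. -/
def op3 (P : List DyckStep) : List DyckStep :=
  let W := P.dropLast.dropLast
  U :: (stripU (stripD W) ++
    (replicate (trailU (stripD W) - 1) U ++ (D :: U :: replicate (lastDescentLen W) D)))

/-- The heights of the valleys (occurrences of the factor `DU`) of a word. -/
def valleyHeights (w : List DyckStep) : List ℕ :=
  (List.range w.length).filterMap fun i =>
    if (w.drop i).take 2 = [D, U] then
      some ((w.take (i + 1)).count U - (w.take (i + 1)).count D)
    else none

lemma takeWhile_rev_eq_replicate (w : List DyckStep) :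
    w.reverse.takeWhile (· == D) = replicate (lastDescentLen w) D := by
  rw [List.eq_replicate_iff]
  refine ⟨rfl, fun b hb => ?_⟩
  simpa using List.mem_takeWhile_imp hb

lemma stripD_append_replicate (w : List DyckStep) :
    stripD w ++ replicate (lastDescentLen w) D = w := by
  conv_rhs => rw [← w.reverse_reverse,
    ← List.takeWhile_append_dropWhile (p := (· == D)) (l := w.reverse),
    List.reverse_append, takeWhile_rev_eq_replicate, List.reverse_replicate]
  rfl

/-- Every element of `θ(P)` is again a Dyck path of semilength `n`. -/
theorem stmt0 (n : ℕ) (hn : 2 ≤ n) (P : DyckWord) (hP : P.semilength = n)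
    (hact : IsActive P.toList) :
    ∀ Y ∈ theta P.toList, ∃ Q : DyckWord, Q.semilength = n ∧ Q.toList = Y := by
  intro Y hY
  obtain ⟨-, j, hj, -, hYeq⟩ := hY
  have h0 : P ≠ 0 := by
    intro h
    rw [h] at hP
    simp at hP
    omega
  have hnest : P.IsNested := ⟨h0, fun i hi hi' => hact i hi hi'⟩
  set Q := P.denest hnest with hQdef
  have hQl : Q.toList = inner P.toList := rfl
  set R := stripD Q.toList with hR
  set m := lastDescentLen Q.toList with hm
  have hsplit : R ++ replicate m D = Q.toList := stripD_append_replicate _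
  have hbal : R.count U = R.count D + m := by
    have := Q.count_U_eq_count_D
    rw [← hsplit] at this
    simp [List.count_append, List.count_replicate] at this
    omega
  have hYeq' : Y = R ++ (replicate (m - j) D ++ (U :: replicate (j + 1) D)) := by
    rw [hYeq, ← hQl]
  have hjm : j ≤ m := by rwa [← hQl] at hj
  have hcU : (P.toList).count U = Q.toList.count U + 1 := by
    have hc := DyckWord.cons_tail_dropLast_concat h0
    have hq2 : Q.toList = (P.toList).dropLast.tail := rfl
    conv_lhs => rw [← hc]
    rw [hq2]
    simp [List.count_append]
  refine ⟨⟨Y, ?_, ?_⟩, ?_, rfl⟩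
  · rw [hYeq']
    simp [List.count_append, List.count_replicate]
    omega
  · intro i
    by_cases hi : i ≤ R.length + (m - j)
    · have key : Y.take i = Q.toList.take i := by
        have e1 : (replicate (m - j) D ++ (U :: replicate (j + 1) D)).take
            (i - R.length) = replicate ((i - R.length) ⊓ (m - j)) D := by
          rw [List.take_append_of_le_length (by simp; omega), List.take_replicate]
        have e2 : (replicate m D).take (i - R.length)
            = replicate ((i - R.length) ⊓ m) D := by rw [List.take_replicate]
        have h2 : (i - R.length) ⊓ (m - j) = (i - R.length) ⊓ m := by omega
        rw [hYeq', ← hsplit, List.take_append, e1,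
          List.take_append, e2, h2]
      rw [key]
      exact Q.count_D_le_count_U i
    · push_neg at hi
      have key : Y.take i = (R ++ replicate (m - j) D ++ [U]) ++
          (replicate (j + 1) D).take (i - (R.length + (m - j) + 1)) := by
        rw [hYeq', show R ++ (replicate (m - j) D ++ (U :: replicate (j + 1) D)) =
          (R ++ replicate (m - j) D ++ [U]) ++ replicate (j + 1) D by simp,
          List.take_append,
          List.take_of_length_le (by simp; omega)]
        congr 2
        simp
        omega
      rw [key]
      simp [List.count_append, List.take_replicate, List.count_replicate,
        List.count_cons]
      omega
  · show Y.count U = n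
    rw [hYeq']
    simp [List.count_append, List.count_replicate, List.count_cons]
    have : Q.toList.count U = R.count U := by
      rw [← hsplit]; simp [List.count_append, List.count_replicate]
    rw [DyckWord.semilength] at hP
    omega
end

section
/- (Proposition 1, part 2.) Let n ≥ 2 and let X₁, X₂ be Dyck paths of semilength n with X₁ ≠ X₂. Then θ(X₁) ∩ θ(X₂) = ∅. -/
open List DyckStep


lemma dropWhile_repl (t : List DyckStep) (b : ℕ) :
    (replicate b D ++ U :: t).dropWhile (· == D) = U :: t := by
  induction b with
  | zero => rfl
  | succ b ih => simpa [replicate_succ, List.dropWhile] using ih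

lemma takeWhile_repl (t : List DyckStep) (b : ℕ) :
    (replicate b D ++ U :: t).takeWhile (· == D) = replicate b D := by
  induction b with
  | zero => rfl
  | succ b ih => simpa [replicate_succ, List.takeWhile] using ih

lemma strip_decomp (w : List DyckStep) :
    w = stripD w ++ replicate (lastDescentLen w) D := by
  unfold stripD lastDescentLen
  have hall : ∀ x ∈ w.reverse.takeWhile (· == D), x = D := fun x hx => by
    simpa using List.mem_takeWhile_imp hx
  have hrep : w.reverse.takeWhile (· == D)
      = replicate (w.reverse.takeWhile (· == D)).length D :=
    List.eq_replicate_of_mem hall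
  conv_lhs => rw [← w.reverse_reverse,
    ← List.takeWhile_append_dropWhile (p := (· == D)) (l := w.reverse)]
  rw [reverse_append]
  congr 1
  rw [hrep, reverse_replicate]
  simp

lemma theta_recover {P Y : List DyckStep} (h : Y ∈ theta P) :
    inner P ++ [D] = (stripD Y).dropLast ++ replicate (lastDescentLen Y) D := by
  obtain ⟨-, j, hj, -, rfl⟩ := h
  set m := lastDescentLen (inner P) with hm
  set A := stripD (inner P) with hA
  have hrev : (A ++ (replicate (m - j) D ++ (U :: replicate (j + 1) D))).reverse
      = replicate (j + 1) D ++ U :: (replicate (m - j) D ++ A.reverse) := by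
    simp [reverse_append]
  have hstrip : stripD (A ++ (replicate (m - j) D ++ (U :: replicate (j + 1) D)))
      = A ++ replicate (m - j) D ++ [U] := by
    rw [stripD, hrev, dropWhile_repl]
    simp
  have hldl : lastDescentLen (A ++ (replicate (m - j) D ++ (U :: replicate (j + 1) D)))
      = j + 1 := by
    rw [lastDescentLen, hrev, takeWhile_repl, length_replicate]
  rw [hstrip, hldl, dropLast_concat, append_assoc, ← replicate_add]
  have : m - j + (j + 1) = m + 1 := by omega
  rw [this]
  conv_lhs => rw [strip_decomp (_root_.inner P), ← hA, ← hm]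
  rw [append_assoc, ← replicate_succ']

/-- Proposition 1, part 2: distinct Dyck paths of semilength `n` have disjoint `θ`-images. -/
theorem stmt2 (n : ℕ) (hn : 2 ≤ n) (X₁ X₂ : DyckWord)
    (h₁ : X₁.semilength = n) (h₂ : X₂.semilength = n) (hne : X₁ ≠ X₂) :
    theta X₁.toList ∩ theta X₂.toList = ∅ := by
  rw [Set.eq_empty_iff_forall_notMem]
  rintro Y ⟨hY₁, hY₂⟩
  have e := (theta_recover hY₁).trans (theta_recover hY₂).symm
  have einner : _root_.inner X₁.toList = _root_.inner X₂.toList := by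
    simpa using e
  have hne₁ : X₁ ≠ 0 := by
    intro h; rw [h] at h₁
    have : (0 : DyckWord).semilength = 0 := rfl
    omega
  have hne₂ : X₂ ≠ 0 := by
    intro h; rw [h] at h₂
    have : (0 : DyckWord).semilength = 0 := rfl
    omega
  apply hne
  have c₁ := X₁.cons_tail_dropLast_concat hne₁
  have c₂ := X₂.cons_tail_dropLast_concat hne₂
  have : X₁.toList = X₂.toList := by
    rw [← c₁, ← c₂]
    unfold _root_.inner at einner
    rw [einner]
  exact DyckWord.ext this
end

section
/- (Proposition 2.) Let n ≥ 1 and let Y be any Dyck path of semilength n. Then there exist k ∈ ℕ and a finite sequence X₀, X₁, …, X_k of Dyck paths of semilength n with X₀ = p_n, X_k = Y, and X_{i+1} ∈ θ(X_i) for all 0 ≤ i ≤ k − 1. -/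
open List DyckStep


def mu : List DyckStep → ℕ
  | [] => 0
  | U :: l => mu l
  | D :: l => l.count U + mu l

@[simp] lemma mu_nil : mu [] = 0 := rfl
@[simp] lemma mu_cons_U (l : List DyckStep) : mu (U :: l) = mu l := rfl
@[simp] lemma mu_cons_D (l : List DyckStep) : mu (D :: l) = l.count U + mu l := rfl

lemma mu_append (a b : List DyckStep) :
    mu (a ++ b) = mu a + mu b + a.count D * b.count U := by
  induction a with
  | nil => simp
  | cons x r ih => cases x <;> simp [ih, count_cons] <;> ring

@[simp] lemma mu_repD (k : ℕ) : mu (replicate k D) = 0 := by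
  induction k with
  | zero => rfl
  | succ k ih => simp [replicate_succ, ih, count_replicate]

lemma mem_repD (k : ℕ) : ∀ a ∈ replicate k D, (a == D) = true := by
  intro a ha; simp [eq_of_mem_replicate ha]

lemma dropWhile_repU (k : ℕ) :
    (replicate k U).dropWhile (· == D) = replicate k U := by
  cases k with
  | zero => rfl
  | succ k => simp [replicate_succ, dropWhile_cons]

lemma takeWhile_isD_eq_replicate (l : List DyckStep) :
    l.takeWhile (· == D) = replicate (l.takeWhile (· == D)).length D := by
  rw [eq_replicate_length]
  intro b hb
  simpa using mem_takeWhile_imp hb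

lemma takeWhile_dropWhile_D (l : List DyckStep) :
    (l.dropWhile (· == D)).takeWhile (· == D) = [] := by
  induction l with
  | nil => rfl
  | cons x xs ih =>
    rw [dropWhile_cons]
    split
    · exact ih
    · rename_i h
      rw [takeWhile_cons]
      simp only [Bool.not_eq_true] at h
      simp [h]

lemma dropWhile_of_takeWhile_nil {l : List DyckStep} (h : l.takeWhile (· == D) = []) :
    l.dropWhile (· == D) = l := by
  cases l with
  | nil => rfl
  | cons x r =>
    rw [takeWhile_cons] at h
    rw [dropWhile_cons]
    split at h
    · exact absurd h (by simp)
    · simp_all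

/-- Proposition 2: every Dyck path of semilength `n` is reachable from the pyramid `p_n`
by a finite sequence of applications of `θ`. -/
theorem stmt3 (n : ℕ) (hn : 1 ≤ n) (Y : DyckWord) (hY : Y.semilength = n) :
    ∃ (k : ℕ) (X : ℕ → DyckWord), (∀ i ≤ k, (X i).semilength = n) ∧
      (X 0).toList = pyr n ∧ X k = Y ∧
      ∀ i < k, (X (i + 1)).toList ∈ theta (X i).toList := by
  suffices H : ∀ N (Z : DyckWord), Z.semilength = n → mu Z.toList = N →
      ∃ (k : ℕ) (X : ℕ → DyckWord), (∀ i ≤ k, (X i).semilength = n) ∧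
        (X 0).toList = pyr n ∧ X k = Z ∧
        ∀ i < k, (X (i + 1)).toList ∈ theta (X i).toList by
    exact H _ Y hY rfl
  intro N
  induction N using Nat.strong_induction_on with
  | _ N ih =>
  intro Y hY hmu
  by_cases hpyr : Y.toList = pyr n
  · exact ⟨0, fun _ => Y, fun i _ => hY, hpyr, rfl, fun i hi => absurd hi (by omega)⟩
  -- counts
  have hcu' : Y.toList.count U = n := hY
  have hcdY : Y.toList.count D = n := by rw [← Y.count_U_eq_count_D]; exact hY
  have hYne : Y.toList ≠ [] := by intro h; rw [h] at hcu'; simp at hcu'; omega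
  have hYrne : Y.toList.reverse ≠ [] := by simpa using hYne
  -- step 1 : the reverse starts with D
  obtain ⟨y₁, hy₁⟩ : ∃ r, Y.toList.reverse = D :: r := by
    refine ⟨Y.toList.reverse.tail, ?_⟩
    have h3 : Y.toList.reverse.head hYrne = D := by
      rw [head_reverse]; exact Y.getLast_eq_D hYne
    conv_lhs => rw [← cons_head_tail hYrne, h3]
  -- step 2 : strip the D-run of y₁
  set s : ℕ := (y₁.takeWhile (· == D)).length with hs
  have hy₁tw : y₁.takeWhile (· == D) = replicate s D := takeWhile_isD_eq_replicate y₁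
  set r : List DyckStep := y₁.dropWhile (· == D) with hr
  have hrne : r ≠ [] := by
    intro h
    have : y₁ = replicate s D := by
      conv_lhs => rw [← takeWhile_append_dropWhile (p := (· == D)) (l := y₁)]
      rw [hy₁tw, ← hr, h, append_nil]
    rw [this] at hy₁
    have := congrArg (List.count U) hy₁
    simp [count_replicate] at this
    omega
  have hrtw : r.takeWhile (· == D) = [] := by
    rw [hr]; exact takeWhile_dropWhile_D y₁
  obtain ⟨x, b, hb⟩ := exists_cons_of_ne_nil hrne
  have hxU : x = U := by
    rw [hb, takeWhile_cons] at hrtw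
    split at hrtw
    · exact absurd hrtw (by simp)
    · rcases x.dichotomy with h | h
      · exact h
      · simp [h] at *
  rw [hxU] at hb
  -- step 3 : strip the D-run of b
  set ℓ : ℕ := (b.takeWhile (· == D)).length with hℓ
  have hbtw : b.takeWhile (· == D) = replicate ℓ D := takeWhile_isD_eq_replicate b
  set c : List DyckStep := b.dropWhile (· == D) with hc
  have hctw : c.takeWhile (· == D) = [] := by
    rw [hc]; exact takeWhile_dropWhile_D b
  have hcdw : c.dropWhile (· == D) = c := dropWhile_of_takeWhile_nil hctw
  set A : List DyckStep := c.reverse with hA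
  have hAr : A.reverse = c := by rw [hA, reverse_reverse]
  -- the master decomposition
  have hyfull : Y.toList.reverse = replicate (s + 1) D ++ (U :: (replicate ℓ D ++ c)) := by
    rw [hy₁]
    conv_lhs => rw [show y₁ = y₁.takeWhile (· == D) ++ y₁.dropWhile (· == D) from
      (takeWhile_append_dropWhile).symm]
    rw [hy₁tw, ← hr, hb]
    conv_lhs => rw [show b = b.takeWhile (· == D) ++ b.dropWhile (· == D) from
      (takeWhile_append_dropWhile).symm]
    rw [hbtw, ← hc]
    simp [replicate_succ]
  have hdec : Y.toList = A ++ (replicate ℓ D ++ (U :: replicate (s + 1) D)) := by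
    rw [← reverse_reverse Y.toList, hyfull]
    simp [reverse_replicate, append_assoc]
    exact hA.symm
  -- counts of A
  have hcuA : A.count U + 1 = n := by
    rw [hdec] at hcu'
    simp [count_replicate, count_cons] at hcu'
    omega
  have hcdA : A.count D + ℓ + (s + 1) = n := by
    rw [hdec] at hcdY
    simp [count_replicate, count_cons] at hcdY
    omega
  -- prefix property of A
  have hApre : ∀ i, (A.take i).count D ≤ (A.take i).count U := by
    intro i
    rcases le_or_gt i A.length with h | h
    · have h1 : Y.toList.take i = A.take i := by
        rw [hdec, take_append_of_le_length h]
      have := Y.count_D_le_count_U i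
      rwa [h1] at this
    · rw [take_of_length_le h.le]
      have h1 : Y.toList.take A.length = A := by
        rw [hdec, take_append_of_le_length le_rfl, take_length]
      have := Y.count_D_le_count_U A.length
      rwa [h1] at this
  have hdleA : A.count D ≤ A.count U := by
    have := hApre A.length
    rwa [take_length] at this
  -- the new word P
  set K : ℕ := s + ℓ + 1 with hK
  set PL : List DyckStep := U :: (A ++ replicate K D) with hPL
  have hPU : PL.count U = n := by
    rw [hPL]; simp [count_cons, count_replicate]; omega
  have hPD : PL.count D = n := by
    rw [hPL]; simp [count_cons, count_replicate]; omega
  have hpre : ∀ i, ((PL.take i).count D ≤ (PL.take i).count U) := by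
    intro i
    cases i with
    | zero => simp
    | succ i =>
      rw [hPL, take_succ_cons, take_append, take_replicate]
      simp only [count_cons, count_append, count_replicate, beq_iff_eq, reduceCtorEq,
        if_false, if_true, reduceIte]
      rcases le_or_gt i A.length with h | h
      · have h0 : i - A.length = 0 := by omega
        have := hApre i
        simp only [h0] at *
        simp
        omega
      · rw [take_of_length_le h.le]
        have h1 : min (i - A.length) K ≤ K := min_le_right _ _
        simp
        omega
  set P : DyckWord := ⟨PL, by omega, hpre⟩ with hP
  have hPlen : PL.length = 1 + (A.length + K) := by
    rw [hPL]; simp [length_replicate]; omega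
  have hact : IsActive PL := by
    intro i hi hilen
    rw [hPlen] at hilen
    cases i with
    | zero => omega
    | succ i =>
      rw [hPL, take_succ_cons, take_append, take_replicate]
      simp only [count_cons, count_append, count_replicate, beq_iff_eq, reduceCtorEq,
        if_false, if_true, reduceIte]
      rcases le_or_gt i A.length with h | h
      · have h0 : i - A.length = 0 := by omega
        have := hApre i
        simp only [h0] at *
        simp
        omega
      · rw [take_of_length_le h.le]
        have h1 : min (i - A.length) K = i - A.length := min_eq_left (by omega)
        simp
        omega
  -- inner computations
  have hinner : _root_.inner PL = A ++ replicate (s + ℓ) D := by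
    have h1 : PL = (U :: (A ++ replicate (s + ℓ) D)) ++ [D] := by
      rw [hPL, hK, replicate_succ' (n := s + ℓ) (a := D)]
      simp [append_assoc]
    rw [_root_.inner, h1, dropLast_concat]
    rfl
  have hinnerrev : (_root_.inner PL).reverse = replicate (s + ℓ) D ++ c := by
    rw [hinner, reverse_append, reverse_replicate, hAr]
  have hLD : lastDescentLen (_root_.inner PL) = s + ℓ := by
    rw [lastDescentLen, hinnerrev, takeWhile_append_of_pos (mem_repD _), hctw]
    simp
  have hstrip : stripD (_root_.inner PL) = A := by
    rw [stripD, hinnerrev, dropWhile_append_of_pos (mem_repD _), hcdw, hA]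
  -- key : if ℓ = 0 and A is all U's then Y is the pyramid
  have hkey : ℓ = 0 → A = replicate (A.count U) U → False := by
    intro hl0 hAU
    apply hpyr
    have hd0 : A.count D = 0 := by
      rw [hAU]; simp [count_replicate]
    have hsa : s = A.count U := by omega
    have hnA : n = s + 1 := by omega
    rw [hdec, hAU, hl0, hnA, ← hsa, pyr, replicate_succ' (n := s) (a := U)]
    simp [append_assoc, replicate_succ, count_replicate]
  -- θ-membership
  have hmem : Y.toList ∈ theta PL := by
    refine ⟨hact, s, ?_, ?_, ?_⟩
    · rw [hLD]; omega
    · intro hp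
      rw [hLD]
      rw [hPU] at hp
      by_contra hcon
      have hl0 : ℓ = 0 := by omega
      refine hkey hl0 ?_
      have h2 : A ++ replicate K D = replicate (A.count U) U ++ replicate n D := by
        have h3 : pyr n = U :: (replicate (A.count U) U ++ replicate n D) := by
          rw [pyr, ← hcuA, replicate_succ]
          simp
        rw [h3, hPL] at hp
        exact (List.cons_injective.eq_iff.mp hp)
      have h4 := congrArg (fun l => (List.reverse l).dropWhile (· == D)) h2
      simp only [reverse_append, reverse_replicate, hAr] at h4
      rw [dropWhile_append_of_pos (mem_repD _), dropWhile_append_of_pos (mem_repD _),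
        hcdw, dropWhile_repU] at h4
      rw [hA, h4, reverse_replicate]
      simp [count_replicate]
    · rw [hLD, hstrip]
      have : s + ℓ - s = ℓ := by omega
      rw [this]
      exact hdec
  -- μ decreases
  have hmuY : mu Y.toList = mu A + (ℓ + A.count D) := by
    rw [hdec, mu_append, mu_append]
    simp [count_replicate, count_cons]
    ring
  have hmuP : mu PL = mu A := by
    rw [hPL]
    simp [mu_append, count_replicate]
  have hpos : 1 ≤ ℓ + A.count D := by
    by_contra h
    push_neg at h
    have hl0 : ℓ = 0 := by omega
    have hd0 : A.count D = 0 := by omega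
    refine hkey hl0 ?_
    have h1 : ∀ x ∈ A, x = U := by
      intro x hx
      rcases x.dichotomy with h | h
      · exact h
      · rw [h] at hx
        have := count_pos_iff.mpr hx
        omega
    have h2 : A = replicate A.length U := eq_replicate_length.mpr h1
    have h3 : A.count U = A.length := by
      conv_lhs => rw [h2]
      simp
    rw [h3]
    exact h2
  -- apply the induction hypothesis
  have hPsem : P.semilength = n := hPU
  obtain ⟨k, X, hX1, hX2, hX3, hX4⟩ := ih (mu PL) (by omega) P hPsem rfl
  refine ⟨k + 1, fun i => if i ≤ k then X i else Y, ?_, ?_, ?_, ?_⟩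
  · intro i hi
    by_cases h : i ≤ k
    · simp only [if_pos h]; exact hX1 i h
    · simp only [if_neg h]; exact hY
  · simp only [if_pos (Nat.zero_le k)]; exact hX2
  · simp only [if_neg (by omega : ¬ k + 1 ≤ k)]
  · intro i hik
    by_cases h : i < k
    · simp only [if_pos (le_of_lt h), if_pos (Nat.succ_le_of_lt h)]
      exact hX4 i h
    · have hik' : i = k := by omega
      subst hik'
      simp only [if_pos le_rfl, if_neg (by omega : ¬ i + 1 ≤ i)]
      rw [hX3]
      exact hmem
end

section
/- (Correctness of the inverse operator θ⁻¹.) Let n ≥ 2 and let Y be a Dyck path of semilength n with Y ≠ p_n. Then τ(Y) is an active Dyck path of semilength n and Y ∈ θ(τ(Y)). -/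
open List DyckStep


private lemma rfdu (k : ℕ) (B : List DyckStep) :
    removeFirstDU (replicate (k+1) D ++ U :: B) = replicate k D ++ B := by
  induction k with
  | zero => rfl
  | succ k ih =>
    rw [replicate_succ, cons_append]
    rw [show removeFirstDU (D :: (replicate (k+1) D ++ U :: B)) =
      D :: removeFirstDU (replicate (k+1) D ++ U :: B) by rw [replicate_succ]; rfl, ih,
      replicate_succ, cons_append]

private lemma twD_rep (k : ℕ) (l : List DyckStep) :
    takeWhile (· == D) (replicate k D ++ l) = replicate k D ++ takeWhile (· == D) l := by
  induction k with
  | zero => simp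
  | succ k ih => simp [replicate_succ, takeWhile_cons, ih]

private lemma dwD_rep (k : ℕ) (l : List DyckStep) :
    dropWhile (· == D) (replicate k D ++ l) = dropWhile (· == D) l := by
  induction k with
  | zero => simp
  | succ k ih => simp [replicate_succ, dropWhile_cons, ih]

private lemma rep_decomp (l : List DyckStep) :
    ∃ t C, l = replicate t D ++ C ∧ (C = [] ∨ ∃ C', C = U :: C') := by
  refine ⟨(l.takeWhile (· == D)).length, l.dropWhile (· == D), ?_, ?_⟩
  · conv_lhs => rw [← takeWhile_append_dropWhile (p := (· == D)) (l := l)]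
    congr 1
    refine eq_replicate_iff.mpr ⟨rfl, fun b hb => ?_⟩
    simpa using mem_takeWhile_imp hb
  · rcases eq_or_ne (l.dropWhile (· == D)) [] with h | h
    · exact Or.inl h
    · obtain ⟨x, C', hx⟩ := exists_cons_of_ne_nil h
      refine Or.inr ⟨C', ?_⟩
      have h2 := head?_dropWhile_not (· == D) l
      rw [hx, head?_cons] at h2
      simp only at h2
      rw [hx]
      cases x
      · rfl
      · simp at h2

private lemma inner_eq (x y : DyckStep) (l : List DyckStep) :
    _root_.inner (x :: (l ++ [y])) = l := by
  unfold _root_.inner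
  rw [show x :: (l ++ [y]) = (x :: l) ++ [y] from rfl, dropLast_concat, tail_cons]

private lemma twC_nil {C : List DyckStep} (hC : C = [] ∨ ∃ C', C = U :: C') :
    takeWhile (· == D) C = [] := by
  rcases hC with rfl | ⟨C', rfl⟩
  · rfl
  · simp [takeWhile_cons]

private lemma dwC_self {C : List DyckStep} (hC : C = [] ∨ ∃ C', C = U :: C') :
    dropWhile (· == D) C = C := by
  rcases hC with rfl | ⟨C', rfl⟩
  · rfl
  · simp [dropWhile_cons]

/-- Correctness of the inverse operator: for a Dyck path `Y ≠ p_n` of semilength `n ≥ 2`,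
`τ(Y)` is an active Dyck path of semilength `n` and `Y ∈ θ(τ(Y))`. -/
theorem stmt6 (n : ℕ) (hn : 2 ≤ n) (Y : DyckWord) (hY : Y.semilength = n)
    (hne : Y.toList ≠ pyr n) :
    IsActive (tau Y.toList) ∧
      (∃ X : DyckWord, X.semilength = n ∧ X.toList = tau Y.toList) ∧
      Y.toList ∈ theta (tau Y.toList) := by
  have hUw : Y.toList.count U = n := hY
  have hDw : Y.toList.count D = n := by rw [← Y.count_U_eq_count_D]; exact hY
  set w := Y.toList with hwdef
  -- decompose the reverse of w
  obtain ⟨m', B, hrev1, hB1⟩ := rep_decomp w.reverse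
  -- B is nonempty
  have hBne : B ≠ [] := by
    rintro rfl
    rcases hB1 with h | ⟨C', h⟩
    · rw [h, append_nil] at hrev1
      have : w.reverse.count U = 0 := by rw [hrev1]; simp [count_replicate]
      rw [count_reverse, hUw] at this
      omega
    · simp at h
  obtain ⟨C', hB2⟩ : ∃ C', B = U :: C' := by
    rcases hB1 with h | h
    · exact absurd h hBne
    · exact h
  subst hB2
  -- m' ≥ 1 since w ends with D
  obtain ⟨k, rfl⟩ : ∃ k, m' = k + 1 := by
    rcases Nat.eq_zero_or_pos m' with h0 | h0
    · exfalso
      subst h0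
      rw [replicate_zero, nil_append] at hrev1
      have hw2 : w = C'.reverse ++ [U] := by
        rw [← reverse_reverse w, hrev1]; simp
      have h3 := Y.count_D_le_count_U C'.reverse.length
      rw [← hwdef, hw2, take_left] at h3
      have h4 : (C'.reverse ++ [U]).count U = n := by rw [← hw2]; exact hUw
      have h5 : (C'.reverse ++ [U]).count D = n := by rw [← hw2]; exact hDw
      simp [count_append, count_reverse] at h4 h5
      simp [count_reverse] at h3
      omega
    · exact ⟨m' - 1, by omega⟩
  -- decompose C'
  obtain ⟨t, C, hC1, hC⟩ := rep_decomp C'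
  subst hC1
  have hwform : w = C.reverse ++ (replicate t D ++ (U :: replicate (k+1) D)) := by
    rw [← reverse_reverse w, hrev1]
    simp [reverse_append, append_assoc]
  -- counts
  have hcU : C.count U + 1 = n := by
    rw [hwform] at hUw
    simpa [count_append, count_replicate, count_cons] using hUw
  have hcD : C.count D + t + (k + 1) = n := by
    rw [hwform] at hDw
    simp [count_append, count_replicate, count_cons] at hDw
    omega
  -- compute tau
  have htau : tau w = U :: ((C.reverse ++ replicate (t+k) D) ++ [D]) := by
    rw [tau, hrev1, rfdu]
    simp only [reverse_append, reverse_replicate, replicate_add, append_assoc]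
  have htau2 : tau w = U :: (C.reverse ++ replicate (t+k+1) D) := by
    rw [htau]
    simp [replicate_succ' (n := t+k), append_assoc]
  -- activity
  have hactive : IsActive (tau w) := by
    intro i hi0 hilen
    rw [htau2] at hilen ⊢
    obtain ⟨j, rfl⟩ := Nat.exists_eq_succ_of_ne_zero hi0.ne'
    rw [take_succ_cons]
    simp only [count_cons, beq_iff_eq, reduceCtorEq, if_false, if_true]
    rw [take_append]
    rcases le_or_gt j C.reverse.length with hj | hj
    · rw [Nat.sub_eq_zero_of_le hj, take_zero, append_nil]
      have h2 := Y.count_D_le_count_U j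
      have h3 : w.take j = C.reverse.take j := by
        rw [hwform, take_append, Nat.sub_eq_zero_of_le hj, take_zero, append_nil]
      rw [← hwdef, h3] at h2
      omega
    · rw [take_of_length_le hj.le, take_replicate]
      have hjb : j - C.reverse.length < t + k + 1 := by
        simp only [length_cons, length_append, length_replicate] at hilen
        omega
      rw [Nat.min_eq_left hjb.le]
      simp only [count_append, count_replicate, beq_iff_eq, reduceCtorEq, if_false, if_true,
        count_reverse]
      omega
  -- counts of tau
  have hTu : (tau w).count U = n := by
    rw [htau2]
    simp [count_append, count_replicate, count_cons, count_reverse]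
    omega
  have hTd : (tau w).count D = n := by
    rw [htau2]
    simp [count_append, count_replicate, count_cons, count_reverse]
    omega
  -- tau w is a Dyck word
  have hpref : ∀ i, ((tau w).take i).count D ≤ ((tau w).take i).count U := by
    intro i
    rcases Nat.lt_or_ge i (tau w).length with h | h
    · rcases Nat.eq_zero_or_pos i with rfl | h0
      · simp
      · exact (hactive i h0 h).le
    · rw [take_of_length_le h, hTu, hTd]
  -- inner of tau
  have hinner : _root_.inner (tau w) = C.reverse ++ replicate (t+k) D := by
    rw [htau]
    exact inner_eq U D _
  have hm : lastDescentLen (_root_.inner (tau w)) = t + k := by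
    rw [hinner, lastDescentLen, reverse_append, reverse_replicate, reverse_reverse, twD_rep,
      twC_nil hC]
    simp
  have hstrip : stripD (_root_.inner (tau w)) = C.reverse := by
    rw [hinner, stripD, reverse_append, reverse_replicate, reverse_reverse, dwD_rep,
      dwC_self hC]
  refine ⟨hactive, ⟨⟨tau w, hTu.trans hTd.symm, hpref⟩, hTu, rfl⟩, hactive, k, ?_, ?_, ?_⟩
  · rw [hm]; omega
  · intro hpyr
    rw [hm]
    rcases Nat.eq_zero_or_pos t with rfl | ht
    · exfalso
      rw [hTu] at hpyr
      obtain ⟨n2, rfl⟩ : ∃ n2, n = n2 + 2 := ⟨n - 2, by omega⟩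
      rw [htau2] at hpyr
      have hpyr2 : C.reverse ++ replicate (0+k+1) D
          = replicate (n2+1) U ++ replicate (n2+2) D := by
        have hp : pyr (n2+2) = U :: (replicate (n2+1) U ++ replicate (n2+2) D) := by
          rw [pyr, show n2+2 = (n2+1)+1 from rfl, replicate_succ (n := n2+1), cons_append]
        rw [hp] at hpyr
        exact (cons_inj_right U).mp hpyr
      have hrev5 : replicate (k+1) D ++ C = replicate (n2+2) D ++ replicate (n2+1) U := by
        have h6 := congrArg reverse hpyr2
        simpa [reverse_append] using h6
      have h7 := congrArg (takeWhile (· == D)) hrev5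
      rw [twD_rep, twD_rep, twC_nil hC,
        show replicate (n2+1) U = U :: replicate n2 U from rfl] at h7
      simp at h7
      have hk : k = n2 + 1 := by omega
      have h8 := congrArg (dropWhile (· == D)) hrev5
      rw [dwD_rep, dwD_rep, dwC_self hC,
        show replicate (n2+1) U = U :: replicate n2 U from rfl] at h8
      simp at h8
      apply hne
      subst hk
      have h8' : C = replicate (n2+1) U := by rw [h8, replicate_succ]
      rw [hwform, h8', reverse_replicate, pyr,
        show (n2+2) = (n2+1)+1 from rfl, replicate_succ' (n := n2+1) (a := U)]
      simp [append_assoc]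
    · omega
  · rw [hstrip, hm, show t + k - k = t from by omega]
    exact hwform
end

section
/- (Case 1 in the proof of Proposition 2.) Let n ≥ 2 and let Y be a Dyck path of semilength n with Y ≠ p_n whose last ascent has length 1. Then the number of peaks (occurrences of the factor UD) of τ(Y) equals the number of peaks of Y minus 1. -/
open List DyckStep


lemma numPeaks_nil : numPeaks [] = 0 := rfl
lemma numPeaks_single (x) : numPeaks [x] = 0 := rfl
lemma numPeaks_cons_cons (x y : DyckStep) (l) :
    numPeaks (x::y::l) = (if x = U ∧ y = D then 1 else 0) + numPeaks (y::l) := by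
  simp only [numPeaks, tail_cons, zip_cons_cons, filter_cons]
  cases x <;> cases y <;> simp [Nat.add_comm]

lemma numPeaks_append : ∀ (w s : List DyckStep), s ≠ [] →
    numPeaks (w ++ s) = numPeaks w + numPeaks s +
      (if w.getLast? = some U ∧ s.head? = some D then 1 else 0)
  | [], s, hs => by simp [numPeaks_nil]
  | [x], s, hs => by
      obtain ⟨y, s', rfl⟩ := exists_cons_of_ne_nil hs
      rw [singleton_append, numPeaks_cons_cons, numPeaks_single]
      cases x <;> cases y <;> simp [Nat.add_comm]
  | x :: z :: w', s, hs => by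
      have ih := numPeaks_append (z :: w') s hs
      rw [cons_append, cons_append, numPeaks_cons_cons, ← cons_append, ih,
        numPeaks_cons_cons, getLast?_cons_cons]
      ring

lemma numPeaks_replicate_D : ∀ k, numPeaks (replicate k D) = 0
  | 0 => rfl
  | 1 => rfl
  | (k+2) => by
      rw [replicate_succ, replicate_succ, numPeaks_cons_cons, ← replicate_succ,
        numPeaks_replicate_D (k+1)]
      simp

lemma removeFirstDU_rep : ∀ (m : ℕ) (l : List DyckStep),
    removeFirstDU (replicate (m+1) D ++ U :: l) = replicate m D ++ l
  | 0, l => by simp [removeFirstDU]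
  | (m+1), l => by
      rw [replicate_succ, cons_append, replicate_succ (n := m), cons_append]
      show removeFirstDU (D :: D :: (replicate m D ++ U :: l)) = _
      rw [show removeFirstDU (D :: D :: (replicate m D ++ U :: l))
          = D :: removeFirstDU (D :: (replicate m D ++ U :: l)) from rfl,
        ← cons_append, ← replicate_succ, removeFirstDU_rep m l]
      simp [replicate_succ]


/-- Case 1 in the proof of Proposition 2: if the last ascent of `Y` has length 1,
then `τ(Y)` has one peak fewer than `Y`. -/
theorem stmt7 (n : ℕ) (hn : 2 ≤ n) (Y : DyckWord) (hY : Y.semilength = n)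
    (hne : Y.toList ≠ pyr n) (ha : lastAscentLen Y.toList = 1) :
    numPeaks (tau Y.toList) = numPeaks Y.toList - 1 := by
  obtain ⟨L, hL⟩ : ∃ L, Y.toList = L := ⟨_, rfl⟩
  rw [hL] at ha ⊢
  have hnil : L ≠ [] := by
    intro h
    rw [← hY, DyckWord.semilength, hL, h] at hn; simp at hn
  obtain ⟨m, hm⟩ : ∃ m, lastDescentLen L = m := ⟨_, rfl⟩
  have htw : L.reverse.takeWhile (· == D) = replicate m D := by
    rw [← hm, lastDescentLen, eq_replicate_iff]
    exact ⟨rfl, fun b hb => by simpa using (mem_takeWhile_imp hb)⟩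
  have hsplit : L.reverse = replicate m D ++ L.reverse.dropWhile (· == D) :=
    (htw ▸ (takeWhile_append_dropWhile (p := (· == D)) (l := L.reverse)).symm)
  obtain ⟨rest, hrest⟩ : ∃ r, L.reverse.dropWhile (· == D) = r := ⟨_, rfl⟩
  rw [hrest] at hsplit
  have ha' : (rest.takeWhile (· == U)).length = 1 := by
    rw [lastAscentLen, hrest] at ha; exact ha
  obtain ⟨a, t, hat⟩ : ∃ a t, rest = a :: t := by
    cases hc : rest with
    | nil => rw [hc] at ha'; simp at ha'
    | cons a t => exact ⟨a, t, rfl⟩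
  have haU : a = U := by
    rcases a with _ | _
    · rfl
    · rw [hat] at ha'; simp [takeWhile_cons] at ha'
  subst haU
  rw [hat, takeWhile_cons] at ha'
  replace ha' : ∀ hl : 0 < t.length, ¬ t[0] = U := by
    simp [length_eq_zero_iff] at ha'
    exact ha'
  obtain ⟨t', ht'⟩ : ∃ t', t = D :: t' := by
    cases t with
    | nil =>
      exfalso
      have hLU : L = U :: replicate m D := by
        have h2 := hsplit
        rw [hat] at h2
        have : L = (replicate m D ++ [U]).reverse := by
          rw [← h2]; simp
        simpa using this
      have hcu : L.count U = n := by rw [← hY, DyckWord.semilength, hL]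
      rw [hLU] at hcu
      simp [count_replicate] at hcu
      omega
    | cons b t' =>
      rcases b with _ | _
      · simp at ha'
      · exact ⟨t', rfl⟩
  subst ht'
  have hLrev : L.reverse = replicate m D ++ U :: D :: t' := by rw [hsplit, hat]
  have hLeq : L = t'.reverse ++ D :: U :: replicate m D := by
    have : L = (replicate m D ++ U :: D :: t').reverse := by rw [← hLrev]; simp
    rw [this]; simp
  -- m ≥ 1
  have hlast : L.getLast? = some D := by
    have h' := Y.getLast_eq_D (by rwa [hL])
    have h2 : (Y.toList).getLast? = some D := by
      rw [getLast?_eq_getLast (l := Y.toList) (by rwa [hL])]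
      exact congrArg some h'
    rwa [hL] at h2
  obtain ⟨m', rfl⟩ : ∃ m', m = m' + 1 := by
    rcases m with _ | m'
    · exfalso
      have h2 : L.reverse.head? = some U := by rw [hLrev]; simp
      rw [head?_reverse, hlast] at h2
      simp at h2
    · exact ⟨m', rfl⟩
  -- head of t'.reverse is U
  have hhead : L.head? = some U := by
    have h' := Y.head_eq_U (by rwa [hL])
    have h2 : (Y.toList).head? = some U := by
      rw [head?_eq_head (by rwa [hL])]
      exact congrArg some h'
    rwa [hL] at h2
  obtain ⟨w0, W', hW⟩ : ∃ w0 W', t'.reverse = w0 :: W' := by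
    cases hc : t'.reverse with
    | nil => rw [hLeq, hc] at hhead; simp at hhead
    | cons a b => exact ⟨a, b, rfl⟩
  have hw0 : w0 = U := by
    rw [hLeq, hW] at hhead
    simpa using hhead
  subst hw0
  rw [hW] at hLeq
  -- compute tau L
  have htau : tau L = U :: ((U :: W') ++ replicate (m' + 2) D) := by
    rw [tau, hLrev, removeFirstDU_rep]
    congr 1
    rw [reverse_append, reverse_replicate, reverse_cons, hW]
    simp [replicate_succ]
    rw [← replicate_succ', replicate_succ]
  -- compute numPeaks
  have e1 : numPeaks L = numPeaks (U :: W') + 1 +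
      (if (U :: W').getLast? = some U then 1 else 0) := by
    rw [hLeq, numPeaks_append _ _ (by simp), numPeaks_cons_cons, replicate_succ,
      numPeaks_cons_cons, ← replicate_succ, numPeaks_replicate_D]
    simp
  have e2 : numPeaks (tau L) = numPeaks (U :: W') +
      (if (U :: W').getLast? = some U then 1 else 0) := by
    rw [htau, show (U :: ((U :: W') ++ replicate (m' + 2) D))
        = [U] ++ ((U :: W') ++ replicate (m' + 2) D) from rfl,
      numPeaks_append _ _ (by simp), numPeaks_append _ _ (by simp),
      numPeaks_replicate_D, numPeaks_single]
    simp [replicate_succ]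
  rw [e1, e2]
  omega
end

section
/- (Number of sons.) Let n ≥ 2 and let P be an active Dyck path of semilength n with P ≠ p_n whose last descent has length k. Then θ(P) has exactly k elements, and the map sending an element of θ(P) to the length of its last descent is a bijection from θ(P) onto {1, 2, …, k}. -/
open List DyckStep


lemma takeWhile_middle (p : DyckStep → Bool) (l : List DyckStep) (y : DyckStep)
    (rest : List DyckStep) (hl : ∀ x ∈ l, p x = true) (hy : p y = false) :
    takeWhile p (l ++ y :: rest) = l := by
  induction l with
  | nil => simp [takeWhile_cons, hy]
  | cons a t ih =>
    simp only [cons_append, takeWhile_cons, hl a mem_cons_self, if_true]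
    rw [ih fun x hx => hl x (mem_cons_of_mem a hx)]

lemma takeWhile_snoc (p : DyckStep → Bool) (l : List DyckStep) (y : DyckStep)
    (hy : p y = false) : takeWhile p (l ++ [y]) = takeWhile p l := by
  induction l with
  | nil => simp [takeWhile_cons, hy]
  | cons a t ih =>
    simp only [cons_append, takeWhile_cons]
    cases p a <;> simp [ih]

/-- Number of sons. -/
theorem stmt10 (n : ℕ) (hn : 2 ≤ n) (P : DyckWord) (hP : P.semilength = n)
    (hact : IsActive P.toList) (hne : P.toList ≠ pyr n) (k : ℕ)
    (hk : lastDescentLen P.toList = k) :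
    (theta P.toList).ncard = k ∧
      Set.BijOn lastDescentLen (theta P.toList) (Set.Icc 1 k) := by
  have hp0 : P ≠ 0 := by
    intro h; rw [h] at hP; simp [DyckWord.semilength_zero] at hP; omega
  have hdec := DyckWord.cons_tail_dropLast_concat hp0
  set L := P.toList with hL
  have hLd : L = U :: inner L ++ [D] := hdec.symm
  set m := lastDescentLen (inner L) with hm
  -- k = m + 1
  have hkm : k = m + 1 := by
    rw [← hk, lastDescentLen]
    nth_rw 1 [hLd]
    have hrev : (U :: inner L ++ [D]).reverse = D :: ((inner L).reverse ++ [U]) := by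
      simp
    rw [hrev, takeWhile_cons]
    simp only [show (D == D) = true from rfl, if_true]
    rw [takeWhile_snoc _ _ _ (by decide)]
    simp only [length_cons]
    rfl
  -- the candidate elements
  set f : ℕ → List DyckStep := fun j =>
    stripD (inner L) ++ (replicate (m - j) D ++ (U :: replicate (j + 1) D)) with hf
  have hcount : L.count U = n := hP
  have hpyr : ¬ (L = pyr (L.count U)) := by rw [hcount]; exact hne
  have hmemf : ∀ j, j ≤ m → f j ∈ theta L := by
    intro j hj
    exact ⟨hact, j, hj, fun h => absurd h hpyr, rfl⟩
  have hmem : ∀ Y ∈ theta L, ∃ j ≤ m, Y = f j := by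
    rintro Y ⟨-, j, hj, -, rfl⟩
    exact ⟨j, hj, rfl⟩
  have hld : ∀ j ≤ m, lastDescentLen (f j) = j + 1 := by
    intro j hj
    rw [hf, lastDescentLen]
    simp only [reverse_append, reverse_cons, reverse_replicate]
    rw [append_assoc, append_assoc, singleton_append]
    rw [takeWhile_middle _ _ _ _ (fun x hx => by
        rw [eq_of_mem_replicate hx]; rfl) (by decide)]
    simp
  constructor
  · -- ncard
    have himg : lastDescentLen '' theta L = Set.Icc 1 k := by
      ext i
      constructor
      · rintro ⟨Y, hY, rfl⟩
        obtain ⟨j, hj, rfl⟩ := hmem Y hY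
        rw [hld j hj]
        simp [Set.mem_Icc]; omega
      · intro hi
        simp only [Set.mem_Icc] at hi
        refine ⟨f (i - 1), hmemf _ (by omega), ?_⟩
        rw [hld _ (by omega)]; omega
    have hinj : Set.InjOn lastDescentLen (theta L) := by
      intro Y hY Y' hY' hEq
      obtain ⟨j, hj, rfl⟩ := hmem Y hY
      obtain ⟨j', hj', rfl⟩ := hmem Y' hY'
      rw [hld j hj, hld j' hj'] at hEq
      rw [Nat.succ_injective hEq]
    rw [← Set.ncard_image_of_injOn hinj, himg, ← Finset.coe_Icc,
      Set.ncard_coe_finset, Nat.card_Icc]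
    omega
  · refine ⟨?_, ?_, ?_⟩
    · intro Y hY
      obtain ⟨j, hj, rfl⟩ := hmem Y hY
      rw [hld j hj]; simp [Set.mem_Icc]; omega
    · intro Y hY Y' hY' hEq
      obtain ⟨j, hj, rfl⟩ := hmem Y hY
      obtain ⟨j', hj', rfl⟩ := hmem Y' hY'
      rw [hld j hj, hld j' hj'] at hEq
      rw [Nat.succ_injective hEq]
    · intro i hi
      simp only [Set.mem_Icc] at hi
      refine ⟨f (i - 1), hmemf _ (by omega), ?_⟩
      rw [hld _ (by omega)]; omega
end

section
/- (Succession rule, general case.) Let n ≥ 2 and let P be an active Dyck path of semilength n with P ≠ p_n, having at least one valley, whose lowest valley has height i and whose last descent has length k. Then for every 1 ≤ s ≤ k, the element of θ(P) whose last descent has length s has at least one valley, and the height of its lowest valley is min(s − 1, i − 1). -/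
open List DyckStep


section Aux

/-- valley heights of `w`, counted with an extra prefix `p`. -/
def vhP (p w : List DyckStep) : List ℕ :=
  (List.range w.length).filterMap fun i =>
    if (w.drop i).take 2 = [D, U] then
      some ((p ++ w.take (i + 1)).count U - (p ++ w.take (i + 1)).count D)
    else none

lemma valleyHeights_eq_vhP (w : List DyckStep) : valleyHeights w = vhP [] w := by
  simp [valleyHeights, vhP]

lemma vhP_cons (p : List DyckStep) (x : DyckStep) (w : List DyckStep) :
    vhP p (x :: w) =
      (if x = D ∧ w.head? = some U then
        [(p ++ [x]).count U - (p ++ [x]).count D] else []) ++ vhP (p ++ [x]) w := by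
  rw [vhP, length_cons, List.range_succ_eq_map, filterMap_cons]
  have htail : filterMap
      (fun i => if ((x :: w).drop i).take 2 = [D, U] then
        some ((p ++ (x :: w).take (i + 1)).count U - (p ++ (x :: w).take (i + 1)).count D)
        else none) (map Nat.succ (range w.length)) = vhP (p ++ [x]) w := by
    rw [filterMap_map, vhP]
    apply List.filterMap_congr
    intro i hi
    have h1 : ((x :: w).drop (i + 1)).take 2 = (w.drop i).take 2 := rfl
    rw [Function.comp_apply, h1]
    congr 1
    have h2 : (x :: w).take (i + 1 + 1) = x :: w.take (i + 1) := rfl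
    rw [h2]
    have h3 : p ++ x :: w.take (i+1) = (p ++ [x]) ++ w.take (i+1) := by simp
    rw [h3]
  have h0 : ((x :: w).drop 0).take 2 = [D, U] ↔ x = D ∧ w.head? = some U := by
    cases x <;> rcases w with _ | ⟨y, l⟩ <;> first
      | (simp [take_one])
      | (cases y <;> simp [take_one])
  by_cases h : x = D ∧ w.head? = some U
  · rw [if_pos (h0.2 h)]
    show _ :: _ = _
    rw [if_pos h, htail]
    rfl
  · rw [if_neg (fun hc => h (h0.1 hc))]
    show filterMap _ _ = _
    rw [if_neg h, htail]
    rfl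

lemma vhP_nil (p : List DyckStep) : vhP p [] = [] := rfl

lemma vhP_replicate_D (p : List DyckStep) (t : ℕ) : vhP p (replicate t D) = [] := by
  induction t generalizing p with
  | zero => rfl
  | succ t ih =>
    rw [replicate_succ, vhP_cons, ih, if_neg]
    · rfl
    · rintro ⟨-, h⟩
      cases t <;> simp [replicate_succ] at h

lemma head?_append_replicate_D (l : List DyckStep) (t : ℕ) :
    ((l ++ replicate t D).head? = some U) ↔ (l.head? = some U) := by
  cases l <;> cases t <;> simp [replicate_succ]

lemma vhP_append_replicate_D (p w : List DyckStep) (t : ℕ) :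
    vhP p (w ++ replicate t D) = vhP p w := by
  induction w generalizing p with
  | nil => simp [vhP_replicate_D, vhP_nil]
  | cons x w ih =>
    rw [cons_append, vhP_cons, vhP_cons, ih]
    congr 1
    by_cases h : x = D ∧ w.head? = some U
    · rw [if_pos h, if_pos ⟨h.1, (head?_append_replicate_D w t).2 h.2⟩]
    · rw [if_neg h, if_neg (fun hc => h ⟨hc.1, (head?_append_replicate_D w t).1 hc.2⟩)]

lemma vhP_append_U_replicate_D (p w : List DyckStep) (t : ℕ) :
    vhP p (w ++ U :: replicate t D) =
      vhP p w ++ (if w.getLast? = some D then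
        [(p ++ w).count U - (p ++ w).count D] else []) := by
  induction w generalizing p with
  | nil =>
    rw [nil_append, vhP_cons, vhP_replicate_D, vhP_nil]
    simp
  | cons x w ih =>
    rw [cons_append, vhP_cons, ih, vhP_cons]
    rcases eq_or_ne w [] with rfl | hw
    · simp only [vhP_nil, head?_nil, getLast?_singleton, getLast?_nil]
      by_cases h : x = D
      · subst h; simp
      · have : x = U := by cases x <;> simp_all
        subst this; simp
    · have h1 : (w ++ U :: replicate t D).head? = w.head? := by
        cases w
        · simp_all
        · simp
      have h2 : (x :: w).getLast? = w.getLast? := by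
        cases w
        · simp_all
        · simp
      rw [h1, h2]
      simp [append_assoc]

lemma vhP_U_shift (w : List DyckStep)
    (h : ∀ l, (w.take l).count D ≤ (w.take l).count U) :
    vhP [U] w = (vhP [] w).map (· + 1) := by
  rw [vhP, vhP, map_filterMap]
  apply List.filterMap_congr
  intro i hi
  by_cases hc : (w.drop i).take 2 = [D, U]
  · have e1 : ([U] ++ w.take (i+1)).count U = (w.take (i+1)).count U + 1 := by simp
    have e2 : ([U] ++ w.take (i+1)).count D = (w.take (i+1)).count D := by simp
    have e3 : [] ++ w.take (i+1) = w.take (i+1) := rfl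
    rw [if_pos hc, if_pos hc, Option.map_some, e1, e2, e3]
    have := h (i + 1)
    congr 1
    omega
  · rw [if_neg hc, if_neg hc]; rfl

lemma all_U_of_no_DU (t : List DyckStep)
    (h : ∀ q, ((t.drop q).take 2) ≠ [D, U]) (hl : t.getLast? ≠ some D) : D ∉ t := by
  induction t with
  | nil => simp
  | cons x t ih =>
    have ht : D ∉ t := by
      apply ih (fun q => h (q + 1))
      intro hc
      rcases eq_or_ne t [] with rfl | hne
      · simp at hc
      · rw [getLast?_cons, hc] at hl
        exact hl rfl
    cases x with
    | U => simpa using ht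
    | D =>
      exfalso
      rcases t with _ | ⟨y, t'⟩
      · simp at hl
      · cases y with
        | U => exact h 0 rfl
        | D => simp at ht

lemma exists_low_valley (w : List DyckStep)
    (hne : vhP [] w ≠ []) (hlast : w.getLast? ≠ some D)
    (hpre : ∀ l, (w.take l).count D ≤ (w.take l).count U) :
    ∃ h ∈ vhP [] w, h + 1 + w.count D ≤ w.count U := by
  classical
  set S := (Finset.range w.length).filter (fun i => (w.drop i).take 2 = [D, U]) with hS
  have hSne : S.Nonempty := by
    obtain ⟨v, hv⟩ := exists_mem_of_ne_nil _ hne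
    rw [vhP, mem_filterMap] at hv
    obtain ⟨j, hir, hopt⟩ := hv
    by_cases hc : (w.drop j).take 2 = [D, U]
    · exact ⟨j, by simp [hS, Finset.mem_filter, hc, mem_range.1 hir]⟩
    · rw [if_neg hc] at hopt; exact absurd hopt (by simp)
  set i0 := S.max' hSne with hi0
  have hmem : i0 ∈ S := S.max'_mem hSne
  have hcond : (w.drop i0).take 2 = [D, U] := (Finset.mem_filter.1 hmem).2
  have hlt : i0 < w.length := Finset.mem_range.1 (Finset.mem_filter.1 hmem).1
  have hlen2 : i0 + 2 ≤ w.length := by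
    have := congrArg List.length hcond
    simp [length_take, length_drop] at this
    omega
  set t := w.drop (i0 + 1) with ht
  have htlen : t.length = w.length - (i0 + 1) := length_drop
  have htne : t ≠ [] := by
    intro hc; rw [hc] at htlen; simp at htlen; omega
  have hnoDU : ∀ q, ((t.drop q).take 2) ≠ [D, U] := by
    intro q hc
    rw [ht, drop_drop] at hc
    have hj2 : i0 + 1 + q + 2 ≤ w.length := by
      have := congrArg List.length hc
      simp [length_take, length_drop] at this
      omega
    have hjS : i0 + 1 + q ∈ S := by
      simp only [hS, Finset.mem_filter, Finset.mem_range]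
      exact ⟨by omega, hc⟩
    have := S.le_max' _ hjS
    omega
  have hlastt : t.getLast? ≠ some D := by
    have hw : w = w.take (i0 + 1) ++ t := (take_append_drop _ _).symm
    rw [hw, getLast?_append] at hlast
    rcases t with _ | ⟨y, t'⟩
    · exact absurd rfl htne
    · simpa using hlast
  have hDnot : D ∉ t := all_U_of_no_DU t hnoDU hlastt
  have hcntD : t.count D = 0 := count_eq_zero.2 hDnot
  have hUmem : U ∈ t := by
    obtain ⟨y, hy⟩ := exists_mem_of_ne_nil _ htne
    cases y
    · exact hy
    · exact absurd hy hDnot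
  have hcntU : 1 ≤ t.count U := count_pos_iff.2 hUmem
  set q := w.take (i0 + 1) with hq
  refine ⟨q.count U - q.count D, ?_, ?_⟩
  · rw [vhP, mem_filterMap]
    exact ⟨i0, mem_range.2 hlt, by rw [if_pos hcond]; rfl⟩
  · have hw : w = q ++ t := (take_append_drop _ _).symm
    have h1 := congrArg (count U) hw
    have h2 := congrArg (count D) hw
    rw [count_append] at h1 h2
    have h3 := hpre (i0 + 1)
    rw [← hq] at h3
    omega

lemma stripD_spec (w : List DyckStep) :
    w = stripD w ++ replicate (lastDescentLen w) D ∧ (stripD w).getLast? ≠ some D := by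
  have hrep : w.reverse.takeWhile (· == D) = replicate (lastDescentLen w) D := by
    rw [lastDescentLen]
    exact eq_replicate_of_mem (fun b hb => by simpa using mem_takeWhile_imp hb)
  constructor
  · conv_lhs => rw [← reverse_reverse w, ← takeWhile_append_dropWhile (p := (· == D)) (l := w.reverse)]
    rw [reverse_append, hrep, stripD, reverse_replicate]
  · rw [stripD, getLast?_reverse]
    have := head?_dropWhile_not (· == D) w.reverse
    intro hc
    rw [hc] at this
    simp at this

lemma lastDescentLen_append_replicate (w : List DyckStep) (t : ℕ)
    (hw : w.getLast? ≠ some D) : lastDescentLen (w ++ replicate t D) = t := by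
  rw [lastDescentLen, reverse_append, reverse_replicate]
  rw [takeWhile_append_of_pos (by intro a ha; simp [eq_of_mem_replicate ha])]
  have : w.reverse.takeWhile (· == D) = [] := by
    rcases hh : w.reverse with _ | ⟨y, l⟩
    · simp
    · have : w.getLast? = some y := by
        have hw2 : w = l.reverse ++ [y] := by rw [← reverse_cons, ← hh, reverse_reverse]
        rw [hw2]; simp
      have hy : y ≠ D := fun hc => hw (hc ▸ this)
      rw [takeWhile_cons_of_neg (by simpa using hy)]
  rw [length_append, this]
  simp

end Aux


/-- Succession rule, general case: for an active non-pyramid `P` with lowest valley of height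
`i` and last descent of length `k`, for `1 ≤ s ≤ k` the element of `θ(P)` with last descent of
length `s` has at least one valley, of lowest height `min (s-1) (i-1)`. -/
theorem stmt12 (n : ℕ) (hn : 2 ≤ n) (P : DyckWord) (hP : P.semilength = n)
    (hact : IsActive P.toList) (hne : P.toList ≠ pyr n)
    (i : ℕ) (hval : valleyHeights P.toList ≠ [])
    (hmin : (valleyHeights P.toList).minimum = (i : WithTop ℕ))
    (k : ℕ) (hk : lastDescentLen P.toList = k)
    (s : ℕ) (hs1 : 1 ≤ s) (hsk : s ≤ k) :
    (∃ Y ∈ theta P.toList, lastDescentLen Y = s) ∧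
      ∀ Y ∈ theta P.toList, lastDescentLen Y = s →
        valleyHeights Y ≠ [] ∧
          (valleyHeights Y).minimum = ((min (s - 1) (i - 1) : ℕ) : WithTop ℕ) := by
  classical
  have hlen : P.toList.length = 2 * n := by
    rw [← P.two_mul_semilength_eq_length, hP]
  have hnil : P.toList ≠ [] := by
    intro hc; rw [hc] at hlen; simp at hlen; omega
  have hcU : P.toList.count U = n := hP
  have h1 : P.toList = U :: P.toList.tail := by
    conv_lhs => rw [← cons_head_tail hnil]
    rw [P.head_eq_U hnil]
  have htne : P.toList.tail ≠ [] := by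
    intro hc
    have := congrArg List.length h1
    rw [hc] at this; simp at this; omega
  have e1 : P.toList.tail.getLast? = some D := by
    have hgl : P.toList.getLast? = some D := by
      rw [getLast?_eq_getLast hnil, P.getLast_eq_D hnil]
    rw [h1] at hgl
    rcases hh : P.toList.tail with _ | ⟨y, l⟩
    · exact absurd hh htne
    · rw [hh] at hgl; rw [← hgl]; simp
  have e2 : P.toList.tail = P.toList.tail.dropLast ++ [D] := by
    have h3 := dropLast_append_getLast htne
    have h4 : P.toList.tail.getLast htne = D := by
      have h5 := getLast?_eq_getLast (l := P.toList.tail) htne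
      rw [e1] at h5
      exact (Option.some_inj.1 h5).symm
    rw [← h4]
    exact h3.symm
  set M := P.toList.tail.dropLast with hMdef
  have hdecomp : P.toList = U :: (M ++ [D]) := by
    conv_lhs => rw [h1]
    rw [← e2]
  have hinner : inner P.toList = M := by
    show (P.toList.dropLast).tail = M
    rw [hdecomp]
    have e : U :: (M ++ [D]) = (U :: M) ++ [D] := rfl
    rw [e, dropLast_concat, tail_cons]
  obtain ⟨hMdec, hRlast⟩ := stripD_spec M
  set m := lastDescentLen M with hmdef
  set R := stripD M with hRdef
  have hPdec : P.toList = (U :: R) ++ replicate (m + 1) D := by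
    rw [hdecomp]
    conv_lhs => rw [hMdec]
    simp [replicate_succ', append_assoc]
  have hURlast : (U :: R).getLast? ≠ some D := by
    rcases hgr : R.getLast? with _ | z
    · rw [getLast?_cons, hgr]; simp
    · have hz : z ≠ D := fun hc => hRlast (hc ▸ hgr)
      rw [getLast?_cons, hgr]; simpa using hz
  have hkm : m + 1 = k := by
    rw [← hk, hPdec, lastDescentLen_append_replicate _ _ hURlast]
  have hRcnt : R.count U = R.count D + m := by
    have hc := P.count_U_eq_count_D
    rw [hPdec] at hc
    simp [count_append, count_replicate, count_cons] at hc
    omega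
  have hpreR : ∀ l, (R.take l).count D ≤ (R.take l).count U := by
    intro l
    rcases le_or_gt R.length l with h | h
    · rw [take_of_length_le h]
      omega
    · have hlt2 : l + 1 < P.toList.length := by
        rw [hPdec]; simp only [length_append, length_cons, length_replicate]; omega
      have h2 := hact (l + 1) (by omega) hlt2
      have e : P.toList.take (l + 1) = U :: R.take l := by
        rw [hPdec]
        have e' : (U :: R) ++ replicate (m + 1) D = U :: (R ++ replicate (m + 1) D) := rfl
        rw [e', take_succ_cons, take_append,
          Nat.sub_eq_zero_of_le (le_of_lt h)]
        simp
      rw [e] at h2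
      simp [count_cons] at h2
      omega
  have hLkey : valleyHeights P.toList = (vhP [] R).map (· + 1) := by
    rw [valleyHeights_eq_vhP, hPdec]
    have e : (U :: R) ++ replicate (m + 1) D = U :: (R ++ replicate (m + 1) D) := rfl
    rw [e, vhP_cons, if_neg (by simp), nil_append, nil_append,
      vhP_append_replicate_D, vhP_U_shift R hpreR]
  have hLne : vhP [] R ≠ [] := by
    intro hc; apply hval; rw [hLkey, hc]; rfl
  rw [hLkey, Nat.cast_withTop] at hmin
  rw [List.minimum_eq_coe_iff] at hmin
  obtain ⟨hmemi, hbd⟩ := hmin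
  obtain ⟨h0, hh0L, hh0⟩ := mem_map.1 hmemi
  have hi1 : 1 ≤ i := by omega
  have himem : i - 1 ∈ vhP [] R := by
    have e : i - 1 = h0 := by omega
    rw [e]; exact hh0L
  have hlb : ∀ h ∈ vhP [] R, i - 1 ≤ h := by
    intro h hhL
    have := hbd (h + 1) (mem_map.2 ⟨h, hhL, rfl⟩)
    omega
  have hpyrn : ¬(P.toList = pyr (P.toList.count U)) := by rw [hcU]; exact hne
  have hmR : stripD (inner P.toList) = R := by rw [hinner]
  have hmm : lastDescentLen (inner P.toList) = m := by rw [hinner]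
  have hYdesc : ∀ j, lastDescentLen (R ++ (replicate (m - j) D ++ (U :: replicate (j + 1) D)))
      = j + 1 := by
    intro j
    have e : R ++ (replicate (m - j) D ++ (U :: replicate (j + 1) D))
        = ((R ++ replicate (m - j) D) ++ [U]) ++ replicate (j + 1) D := by
      simp [append_assoc]
    rw [e]
    apply lastDescentLen_append_replicate
    simp
  have hYval : ∀ j ≤ m, valleyHeights (R ++ (replicate (m - j) D ++ (U :: replicate (j + 1) D)))
      = vhP [] R ++ (if j < m then [j] else []) := by
    intro j hj
    have e : R ++ (replicate (m - j) D ++ (U :: replicate (j + 1) D))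
        = (R ++ replicate (m - j) D) ++ (U :: replicate (j + 1) D) := by
      rw [append_assoc]
    rw [valleyHeights_eq_vhP, e, vhP_append_U_replicate_D, vhP_append_replicate_D]
    congr 1
    rcases lt_or_ge j m with hjm | hjm
    · rw [if_pos hjm]
      have hmj : m - j = (m - j - 1) + 1 := by omega
      have hgl : (R ++ replicate (m - j) D).getLast? = some D := by
        rw [hmj, replicate_succ', ← append_assoc]
        simp
      rw [if_pos hgl]
      have hv : ([] ++ (R ++ replicate (m - j) D)).count U
          - ([] ++ (R ++ replicate (m - j) D)).count D = j := by
        simp only [nil_append, count_append, count_replicate]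
        simp
        omega
      rw [hv]
    · have hjm' : j = m := by omega
      subst hjm'
      rw [if_neg (lt_irrefl m), Nat.sub_self, replicate_zero, append_nil, if_neg hRlast]
  obtain ⟨hlow, hlowL, hlowle⟩ := exists_low_valley R hLne hRlast hpreR
  have hm1 : 1 ≤ m := by omega
  have hilow : i - 1 ≤ m - 1 := le_trans (hlb _ hlowL) (by omega)
  constructor
  · refine ⟨R ++ (replicate (m - (s - 1)) D ++ (U :: replicate ((s - 1) + 1) D)), ?_, ?_⟩
    · simp only [theta, Set.mem_setOf_eq]
      refine ⟨hact, s - 1, ?_, ?_, ?_⟩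
      · rw [hmm]; omega
      · intro hp; exact absurd hp hpyrn
      · rw [hmR, hmm]
    · rw [hYdesc (s - 1)]; omega
  · rintro Y ⟨-, j, hj, -, rfl⟩ hYs
    rw [hmR, hmm] at hYs ⊢
    rw [hmm] at hj
    rw [hYdesc j] at hYs
    have hjs : j = s - 1 := by omega
    rw [hYval j hj]
    rcases lt_or_ge j m with hjm | hjm
    · rw [if_pos hjm]
      constructor
      · simp
      · rw [Nat.cast_withTop, List.minimum_eq_coe_iff]
        constructor
        · rcases le_or_gt (i - 1) (s - 1) with hc | hc
          · rw [min_eq_right hc]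
            exact mem_append_left _ himem
          · rw [min_eq_left (by omega)]
            apply mem_append_right
            simp [hjs]
        · intro b hb
          rcases mem_append.1 hb with hbL | hbj
          · have := hlb b hbL; omega
          · simp at hbj; omega
    · have hjm' : j = m := by omega
      rw [if_neg (by omega)]
      rw [append_nil]
      refine ⟨hLne, ?_⟩
      rw [Nat.cast_withTop, List.minimum_eq_coe_iff]
      have hmin' : min (s - 1) (i - 1) = i - 1 := by omega
      rw [hmin']
      exact ⟨himem, hlb⟩
end

section
/- (Firstborn of the root by overturning its peak.) Let n ≥ 2. Overturning the rightmost (and unique) peak of p_n = U^n D^n yields the word U^{n−1}·D·U·D^{n−1}; this word belongs to θ(p_n), and its last descent is strictly longer than that of every other element of θ(p_n). -/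
open List DyckStep


lemma takeWhileD_rep (b : ℕ) (l : List DyckStep) :
    (replicate b D ++ U :: l).takeWhile (· == D) = replicate b D := by
  induction b with
  | zero => simp [List.takeWhile_cons]
  | succ b ih => simp [replicate_succ, List.takeWhile_cons, ih]

lemma dropWhileD_rep (b : ℕ) (l : List DyckStep) :
    (replicate b D ++ U :: l).dropWhile (· == D) = U :: l := by
  induction b with
  | zero => simp [List.dropWhile_cons]
  | succ b ih => simp [replicate_succ, List.dropWhile_cons, ih]

lemma swap_cons_D (l : List DyckStep) (h : l.head? ≠ some U) :
    swapFirstDU (D :: l) = D :: swapFirstDU l := by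
  match l with
  | [] => rfl
  | U :: t => simp at h
  | D :: t => rfl

lemma swapFirstDU_rep (k : ℕ) (rest : List DyckStep) :
    swapFirstDU (replicate k D ++ D :: U :: rest) = replicate k D ++ U :: D :: rest := by
  induction k with
  | zero => rfl
  | succ k ih =>
      rw [replicate_succ, List.cons_append, swap_cons_D _ ?_, ih, List.cons_append]
      cases k <;> simp [replicate_succ]

lemma inner_pyr (m : ℕ) :
    inner (pyr (m + 2)) = replicate (m + 1) U ++ replicate (m + 1) D := by
  have h : pyr (m + 2) = (U :: (replicate (m + 1) U ++ replicate (m + 1) D)) ++ [D] := by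
    simp only [pyr, replicate_succ, List.cons_append, List.append_assoc]
    rw [← List.replicate_succ, List.replicate_succ']
  rw [show _root_.inner (pyr (m + 2)) = ((pyr (m+2)).dropLast).tail from rfl, h,
    List.dropLast_concat, List.tail_cons]

lemma isActive_pyr (n : ℕ) (hn : 1 ≤ n) : IsActive (pyr n) := by
  intro i hi hil
  have hlen : (pyr n).length = n + n := by simp [pyr]
  rw [pyr, List.take_append]
  rcases le_or_gt i n with h | h
  · rw [List.take_replicate, min_eq_left h]
    have : i - (replicate n U).length = 0 := by simp; omega
    rw [this]
    simp [List.count_replicate]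
    omega
  · rw [List.take_replicate, min_eq_right h.le, List.take_replicate]
    simp [List.count_replicate]
    rw [hlen] at hil
    omega


lemma lastDescentLen_concat (l : List DyckStep) (t : ℕ) :
    lastDescentLen (l ++ U :: replicate t D) = t := by
  rw [lastDescentLen, List.reverse_append]
  simp only [List.reverse_cons, List.reverse_replicate, List.append_assoc,
    List.singleton_append, takeWhileD_rep, List.length_replicate]


lemma rep_append_cons (a : DyckStep) (k : ℕ) (l : List DyckStep) :
    replicate k a ++ a :: l = a :: (replicate k a ++ l) := by
  rw [← List.singleton_append, ← List.append_assoc, ← List.replicate_succ',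
    List.replicate_succ, List.cons_append]

/-- Firstborn of the root: overturning the unique peak of `p_n` yields
`U^(n-1)·D·U·D^(n-1)`, which belongs to `θ(p_n)` and has a strictly longer last descent
than every other element of `θ(p_n)`. -/
theorem stmt16 (n : ℕ) (hn : 2 ≤ n) :
    overturnLastPeak (pyr n) = replicate (n - 1) U ++ (D :: U :: replicate (n - 1) D) ∧
      (replicate (n - 1) U ++ (D :: U :: replicate (n - 1) D)) ∈ theta (pyr n) ∧
      ∀ Y ∈ theta (pyr n), Y ≠ replicate (n - 1) U ++ (D :: U :: replicate (n - 1) D) →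
        lastDescentLen Y <
          lastDescentLen (replicate (n - 1) U ++ (D :: U :: replicate (n - 1) D)) := by
  obtain ⟨m, rfl⟩ : ∃ m, n = m + 2 := ⟨n - 2, by omega⟩
  have hn1 : m + 2 - 1 = m + 1 := rfl
  rw [hn1]
  have hrev : (pyr (m + 2)).reverse = replicate (m + 1) D ++ D :: U :: replicate (m + 1) U := by
    simp [pyr, replicate_succ, rep_append_cons]
  have h1 : overturnLastPeak (pyr (m + 2)) =
      replicate (m + 1) U ++ (D :: U :: replicate (m + 1) D) := by
    rw [overturnLastPeak, hrev, swapFirstDU_rep]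
    simp [replicate_succ, rep_append_cons]
  have hld : lastDescentLen (_root_.inner (pyr (m + 2))) = m + 1 := by
    rw [inner_pyr, lastDescentLen, List.reverse_append, List.reverse_replicate,
      List.reverse_replicate]
    rw [show replicate (m + 1) U = U :: replicate m U from rfl, takeWhileD_rep]
    simp
  have hsd : stripD (_root_.inner (pyr (m + 2))) = replicate (m + 1) U := by
    rw [inner_pyr, stripD, List.reverse_append, List.reverse_replicate, List.reverse_replicate]
    rw [show replicate (m + 1) U = U :: replicate m U from rfl, dropWhileD_rep,
      List.reverse_cons, List.reverse_replicate, ← List.replicate_succ']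
    simp [List.replicate_succ]
  have hcu : (pyr (m + 2)).count U = m + 2 := by
    simp [pyr, List.count_replicate]
  refine ⟨h1, ⟨isActive_pyr _ (by omega), m, by rw [hld]; omega, fun _ => by rw [hld]; omega, ?_⟩, ?_⟩
  · rw [hld, hsd]
    norm_num
  · rintro Y ⟨-, j, hj, hjp, rfl⟩ hne
    rw [hld] at hj hjp
    rw [hsd, hld]
    have hjm : j < m + 1 := hjp (by rw [hcu])
    have hjm2 : j ≠ m := by
      rintro rfl
      refine hne ?_
      rw [hsd, hld]
      have h1m : ∀ k : ℕ, k + 1 - k = 1 := fun k => by omega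
      simp [h1m]
    rw [show replicate (m + 1) U ++ (replicate (m + 1 - j) D ++ U :: replicate (j + 1) D)
        = (replicate (m + 1) U ++ replicate (m + 1 - j) D) ++ U :: replicate (j + 1) D by
      simp [List.append_assoc], lastDescentLen_concat]
    rw [show replicate (m + 1) U ++ (D :: U :: replicate (m + 1) D)
        = (replicate (m + 1) U ++ [D]) ++ U :: replicate (m + 1) D by
      simp, lastDescentLen_concat]
    omega
end

section
/- (Operation op2 produces the next brother.) Let n ≥ 2, let X be an active Dyck path of semilength n, and let 2 ≤ s. Suppose Y is the element of θ(X) whose last descent has length s. Then overturning the rightmost peak of Y (replacing the last occurrence of the factor UD by DU) yields the element of θ(X) whose last descent has length s − 1. -/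
open List DyckStep


lemma takeWhile_repD (k : ℕ) (L : List DyckStep) :
    (replicate k D ++ U :: L).takeWhile (· == D) = replicate k D := by
  induction k with
  | zero => rfl
  | succ k ih => simp [List.replicate_succ, List.takeWhile_cons, ih]

lemma ldl_aux (S : List DyckStep) (a k : ℕ) :
    lastDescentLen (S ++ (replicate a D ++ U :: replicate k D)) = k := by
  unfold lastDescentLen
  have : (S ++ (replicate a D ++ U :: replicate k D)).reverse
      = replicate k D ++ U :: (replicate a D ++ S.reverse) := by
    simp [List.reverse_append]
  rw [this, takeWhile_repD]
  simp

lemma swap_aux (k : ℕ) (L : List DyckStep) :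
    swapFirstDU (replicate (k+1) D ++ U :: L) = replicate k D ++ U :: D :: L := by
  induction k with
  | zero => simp [swapFirstDU]
  | succ k ih =>
      have : replicate (k+2) D ++ U :: L = D :: (replicate (k+1) D ++ U :: L) := by
        simp [List.replicate_succ]
      rw [this, show swapFirstDU (D :: (replicate (k+1) D ++ U :: L))
          = D :: swapFirstDU (replicate (k+1) D ++ U :: L) from by
          simp [List.replicate_succ, swapFirstDU], ih]
      simp [List.replicate_succ]

lemma overturn_aux (S : List DyckStep) (a k : ℕ) :
    overturnLastPeak (S ++ (replicate a D ++ U :: replicate (k+1) D)) =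
    S ++ (replicate (a+1) D ++ U :: replicate k D) := by
  unfold overturnLastPeak
  have h1 : (S ++ (replicate a D ++ U :: replicate (k+1) D)).reverse
      = replicate (k+1) D ++ U :: (replicate a D ++ S.reverse) := by
    simp [List.reverse_append]
  rw [h1, swap_aux]
  simp [List.reverse_append, List.replicate_succ']

/-- Operation `op2` produces the next brother: overturning the rightmost peak of the element
of `θ(X)` with last descent of length `s ≥ 2` yields the element of `θ(X)` with last descent
of length `s - 1`. -/
theorem stmt17 (n : ℕ) (hn : 2 ≤ n) (X : DyckWord) (hX : X.semilength = n)
    (hact : IsActive X.toList) (s : ℕ) (hs : 2 ≤ s)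
    (Y : List DyckStep) (hY : Y ∈ theta X.toList) (hYs : lastDescentLen Y = s) :
    overturnLastPeak Y ∈ theta X.toList ∧
      lastDescentLen (overturnLastPeak Y) = s - 1 := by
  obtain ⟨hactP, j, hj, hpyr, hYeq⟩ := hY
  set S := stripD (inner X.toList) with hS
  set m := lastDescentLen (inner X.toList) with hm
  have hldl : lastDescentLen Y = j + 1 := by rw [hYeq]; exact ldl_aux _ _ _
  have hjs : j + 1 = s := by rw [← hldl, hYs]
  obtain ⟨k, rfl⟩ : ∃ k, j = k + 1 := ⟨j - 1, by omega⟩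
  have hO : overturnLastPeak Y = S ++ (replicate (m - k) D ++ U :: replicate (k+1) D) := by
    rw [hYeq, overturn_aux]
    have h2 : m - (k+1) + 1 = m - k := by omega
    rw [h2]
  constructor
  · exact ⟨hactP, k, by omega, fun _ => by omega, hO⟩
  · rw [hO, ldl_aux]; omega
end

section
/- (Operation op3 produces the uncle.) Let n ≥ 2 and let X = U·Q·D be an active Dyck path of semilength n with Q a nonempty Dyck path. Let P = Q·U·D, which is the element of θ(X) whose last descent has length 1. Then op3(P) equals the word obtained from X by overturning its rightmost peak (replacing the last occurrence of the factor UD in X by DU). -/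
open List DyckStep


namespace St18

lemma rep_shift (s : DyckStep) (k : ℕ) (t : List DyckStep) :
    replicate k s ++ s :: t = s :: (replicate k s ++ t) := by
  induction k with
  | zero => simp
  | succ n ih => simp [replicate_succ, ih]

lemma tw_rep (s : DyckStep) (m : ℕ) : (replicate m s).takeWhile (· == s) = replicate m s := by
  induction m with
  | zero => simp
  | succ k ih => simp [replicate_succ, takeWhile_cons, ih]

lemma dw_rep (s : DyckStep) (m : ℕ) : (replicate m s).dropWhile (· == s) = [] := by
  induction m with
  | zero => simp
  | succ k ih => simp [replicate_succ, dropWhile_cons, ih]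

lemma tw_DU (m : ℕ) (t : List DyckStep) :
    (replicate m D ++ U :: t).takeWhile (· == D) = replicate m D := by
  induction m with
  | zero => simp [takeWhile_cons]
  | succ k ih => simp [replicate_succ, takeWhile_cons, ih]

lemma dw_DU (m : ℕ) (t : List DyckStep) :
    (replicate m D ++ U :: t).dropWhile (· == D) = U :: t := by
  induction m with
  | zero => simp [dropWhile_cons]
  | succ k ih => simp [replicate_succ, dropWhile_cons, ih]

lemma tw_UD (a : ℕ) (t : List DyckStep) :
    (replicate a U ++ D :: t).takeWhile (· == U) = replicate a U := by
  induction a with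
  | zero => simp [takeWhile_cons]
  | succ k ih => simp [replicate_succ, takeWhile_cons, ih]

lemma dw_UD (a : ℕ) (t : List DyckStep) :
    (replicate a U ++ D :: t).dropWhile (· == U) = D :: t := by
  induction a with
  | zero => simp [dropWhile_cons]
  | succ k ih => simp [replicate_succ, dropWhile_cons, ih]

lemma swap_rep (m : ℕ) (t : List DyckStep) :
    swapFirstDU (replicate (m+1) D ++ U :: t) = replicate m D ++ U :: D :: t := by
  induction m with
  | zero => rfl
  | succ k ih =>
    have h1 : replicate (k+2) D ++ U :: t = D :: D :: (replicate k D ++ U :: t) := by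
      simp [replicate_succ]
    have h2 : replicate (k+1) D ++ U :: t = D :: (replicate k D ++ U :: t) := by
      simp [replicate_succ]
    rw [h1, show swapFirstDU (D :: D :: (replicate k D ++ U :: t)) =
      D :: swapFirstDU (D :: (replicate k D ++ U :: t)) from rfl, ← h2, ih]
    simp [replicate_succ]

lemma decomp (Q : DyckWord) (hQ : Q ≠ 0) :
    ∃ (S : List DyckStep) (a m : ℕ),
      Q.toList = S ++ replicate (a+1) U ++ replicate (m+1) D ∧
      (S = [] ∨ ∃ t, S.reverse = D :: t) := by
  have hne : Q.toList ≠ [] := DyckWord.toList_ne_nil.mpr hQ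
  have hrD : Q.toList.reverse = D :: Q.toList.dropLast.reverse := by
    conv_lhs => rw [← dropLast_append_getLast hne, Q.getLast_eq_D hne]
    simp
  have htwrep : Q.toList.reverse.takeWhile (· == D)
      = replicate (Q.toList.reverse.takeWhile (· == D)).length D := by
    rw [eq_replicate_iff]
    exact ⟨rfl, fun b hb => by simpa using mem_takeWhile_imp hb⟩
  have hm1pos : 0 < (Q.toList.reverse.takeWhile (· == D)).length := by
    rw [hrD, takeWhile_cons]; simp
  have hr1ne : Q.toList.reverse.dropWhile (· == D) ≠ [] := by
    intro h
    have hall : ∀ x ∈ Q.toList, x = D := by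
      intro x hx
      have : x ∈ Q.toList.reverse := by simpa using hx
      simpa using (dropWhile_eq_nil_iff).mp h x this
    have hcU : Q.toList.count U = 0 := by
      rw [count_eq_zero]
      exact fun hmem => absurd (hall U hmem) (by simp)
    have hcD := Q.count_U_eq_count_D
    have hlen : Q.toList.length = Q.toList.count U + Q.toList.count D := by
      induction Q.toList with
      | nil => simp
      | cons x xs ih =>
        cases x <;> simp [count_cons] <;> omega
    exact hne (by simpa using length_eq_zero_iff.mp (by omega))
  obtain ⟨x, t1, hx⟩ := exists_cons_of_ne_nil hr1ne
  have hxU : x = U := by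
    have h1 := head?_dropWhile_not (· == D) Q.toList.reverse
    rw [hx] at h1
    rcases x.dichotomy with h | h
    · exact h
    · simp [h] at h1
  rw [hxU] at hx
  have htw1rep : t1.takeWhile (· == U) = replicate (t1.takeWhile (· == U)).length U := by
    rw [eq_replicate_iff]
    exact ⟨rfl, fun b hb => by simpa using mem_takeWhile_imp hb⟩
  have hS : t1.dropWhile (· == U) = [] ∨ ∃ t, t1.dropWhile (· == U) = D :: t := by
    rcases eq_or_ne (t1.dropWhile (· == U)) [] with h | h
    · exact Or.inl h
    · obtain ⟨y, t2, hy⟩ := exists_cons_of_ne_nil h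
      have h1 := head?_dropWhile_not (· == U) t1
      rw [hy] at h1
      rcases y.dichotomy with hyU | hyD
      · simp [hyU] at h1
      · exact Or.inr ⟨t2, by rw [hy, hyD]⟩
  refine ⟨(t1.dropWhile (· == U)).reverse, (t1.takeWhile (· == U)).length,
    (Q.toList.reverse.takeWhile (· == D)).length - 1, ?_, ?_⟩
  · have h3 : Q.toList = (Q.toList.reverse.dropWhile (· == D)).reverse
        ++ (Q.toList.reverse.takeWhile (· == D)).reverse := by
      rw [← reverse_append, takeWhile_append_dropWhile, reverse_reverse]
    conv_lhs => rw [h3, hx]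
    have h4 : t1 = t1.takeWhile (· == U) ++ t1.dropWhile (· == U) :=
      (takeWhile_append_dropWhile ..).symm
    conv_lhs => rw [htwrep, h4, htw1rep]
    have hm1 : (Q.toList.reverse.takeWhile (· == D)).length
        = ((Q.toList.reverse.takeWhile (· == D)).length - 1) + 1 := by omega
    rw [← hm1]
    simp [replicate_succ']
  · rcases hS with h | ⟨t, h⟩
    · exact Or.inl (by simp [h])
    · exact Or.inr ⟨t, by simpa using h⟩

end St18

open St18

/-- Operation `op3` produces the uncle: if `X = U·Q·D` is active with `Q` a nonempty Dyck
path, then `P = Q·U·D` is the element of `θ(X)` whose last descent has length 1, and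
`op3(P)` equals `X` with its rightmost peak overturned. -/
theorem stmt18 (n : ℕ) (hn : 2 ≤ n) (X Q : DyckWord) (hX : X.semilength = n)
    (hact : IsActive X.toList) (hQ : Q ≠ 0)
    (hXQ : X.toList = U :: (Q.toList ++ [D])) :
    (Q.toList ++ [U, D]) ∈ theta X.toList ∧
      lastDescentLen (Q.toList ++ [U, D]) = 1 ∧
      op3 (Q.toList ++ [U, D]) = overturnLastPeak X.toList := by
  obtain ⟨S, a, m, hdec, hS⟩ := decomp Q hQ
  have hrev : Q.toList.reverse = replicate (m+1) D ++ (U :: (replicate a U ++ S.reverse)) := by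
    rw [hdec]; simp [replicate_succ, append_assoc, rep_shift]
  have hLDL : lastDescentLen Q.toList = m+1 := by
    rw [lastDescentLen, hrev, tw_DU]; simp
  have hstripD : stripD Q.toList = S ++ replicate (a+1) U := by
    rw [stripD, hrev, dw_DU]
    simp [replicate_succ']
  have hstripDrev : (S ++ replicate (a+1) U).reverse = replicate (a+1) U ++ S.reverse := by
    simp
  have htrailU : trailU (S ++ replicate (a+1) U) = a+1 := by
    rw [trailU, hstripDrev]
    rcases hS with h | ⟨t, h⟩
    · subst h; simp [tw_rep]
    · rw [h, tw_UD]; simp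
  have hstripU : stripU (S ++ replicate (a+1) U) = S := by
    rw [stripU, hstripDrev]
    rcases hS with h | ⟨t, h⟩
    · subst h; simp [dw_rep]
    · rw [h, dw_UD, ← h]; simp
  have hinner : _root_.inner X.toList = Q.toList := by
    rw [hXQ, _root_.inner, show U :: (Q.toList ++ [D]) = (U :: Q.toList) ++ [D] from rfl,
      dropLast_concat]
    rfl
  refine ⟨⟨hact, 0, by simp, fun _ => by rw [hinner, hLDL]; omega, ?_⟩, ?_, ?_⟩
  · rw [hinner, hLDL, hstripD, hdec]
    simp [append_assoc]
  · rw [lastDescentLen, show (Q.toList ++ [U, D]).reverse = D :: U :: Q.toList.reverse by simp]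
    simp [takeWhile_cons]
  · have hW : (Q.toList ++ [U, D]).dropLast.dropLast = Q.toList := by
      rw [show Q.toList ++ [U, D] = (Q.toList ++ [U]) ++ [D] by simp, dropLast_concat,
        dropLast_concat]
    have hXrev : X.toList.reverse
        = replicate (m+2) D ++ U :: (replicate a U ++ (S.reverse ++ [U])) := by
      rw [hXQ]
      simp [hrev, replicate_succ, append_assoc, rep_shift]
    rw [op3]
    rw [hW, hstripD, htrailU, hstripU, hLDL]
    rw [overturnLastPeak, hXrev, swap_rep (m+1)]
    simp [replicate_succ, append_assoc, rep_shift]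
end

section
/- (Remark: at most two consecutive applications of op3.) Let n ≥ 3 and let P be a Dyck path of semilength n that ends in the factor UD at height 0 (P = W·U·D with W a nonempty Dyck path). If op3(P) also ends in the factor UD at height 0, then op3(op3(P)) does not end in the factor UD at height 0; in particular, op3 cannot be applied three times in a row. -/
open List DyckStep


/-- A Dyck path ends in the factor `UD` at height 0 if it is `W·U·D` for some nonempty
Dyck path `W`. -/
def EndsInUnitPyramid (p : List DyckStep) : Prop :=
  ∃ W : DyckWord, W ≠ 0 ∧ p = W.toList ++ [U, D]

/- ########## auxiliary lemmas ########## -/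

lemma dropWhile_rep (c : DyckStep) (k : ℕ) (l : List DyckStep) :
    dropWhile (· == c) (replicate k c ++ l) = dropWhile (· == c) l := by
  induction k with
  | zero => simp
  | succ k ih => simp [replicate_succ, ih]

lemma takeWhile_rep (c : DyckStep) (k : ℕ) (l : List DyckStep) :
    takeWhile (· == c) (replicate k c ++ l) = replicate k c ++ takeWhile (· == c) l := by
  induction k with
  | zero => simp
  | succ k ih => simp [replicate_succ, ih]

lemma exists_decomp (c : DyckStep) (w : List DyckStep) :
    ∃ S k, w = S ++ replicate k c ∧ S.getLast? ≠ some c := by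
  refine ⟨(w.reverse.dropWhile (· == c)).reverse, (w.reverse.takeWhile (· == c)).length, ?_, ?_⟩
  · have h1 : w.reverse.takeWhile (· == c) =
        replicate (w.reverse.takeWhile (· == c)).length c :=
      eq_replicate_of_mem (fun b hb => by simpa using mem_takeWhile_imp hb)
    have h2 := w.reverse.takeWhile_append_dropWhile (p := (· == c))
    calc w = w.reverse.reverse := by simp
    _ = (w.reverse.takeWhile (· == c) ++ w.reverse.dropWhile (· == c)).reverse := by rw [h2]
    _ = _ := by rw [reverse_append, h1]; simp
  · rw [getLast?_eq_head?_reverse, reverse_reverse]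
    cases hd : w.reverse.dropWhile (· == c) with
    | nil => simp
    | cons a t =>
      have := head_dropWhile_not (· == c) (l := w.reverse) (by simp [hd])
      simp only [hd, head_cons] at this ⊢
      simpa using this

lemma strip_eval (c : DyckStep) (S : List DyckStep) (k : ℕ) (hS : S.getLast? ≠ some c) :
    (((S ++ replicate k c).reverse.dropWhile (· == c)).reverse = S) ∧
    ((S ++ replicate k c).reverse.takeWhile (· == c)).length = k := by
  rw [reverse_append, reverse_replicate, dropWhile_rep, takeWhile_rep]
  rw [getLast?_eq_head?_reverse] at hS
  cases hd : S.reverse with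
  | nil => simp_all
  | cons a t =>
    rw [hd] at hS; simp only [head?_cons, ne_eq, Option.some.injEq] at hS
    have : (a == c) = false := by simpa using hS
    rw [dropWhile_cons, takeWhile_cons, this]
    simp [← hd]

lemma stripD_eval (S : List DyckStep) (k : ℕ) (hS : S.getLast? ≠ some D) :
    stripD (S ++ replicate k D) = S ∧ lastDescentLen (S ++ replicate k D) = k :=
  strip_eval D S k hS

lemma stripU_eval (S : List DyckStep) (k : ℕ) (hS : S.getLast? ≠ some U) :
    stripU (S ++ replicate k U) = S ∧ trailU (S ++ replicate k U) = k :=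
  strip_eval U S k hS

lemma op3_eq (P : List DyckStep) : op3 P =
    U :: (stripU (stripD P.dropLast.dropLast) ++
      (replicate (trailU (stripD P.dropLast.dropLast) - 1) U ++
        (D :: U :: replicate (lastDescentLen P.dropLast.dropLast) D))) := rfl

lemma not_endsUD (Y : List DyckStep) (k : ℕ) :
    ¬ EndsInUnitPyramid (Y ++ replicate (k + 2) D) := by
  rintro ⟨W, -, h⟩
  have hr : replicate (k + 2) D = replicate k D ++ [D, D] := by
    rw [show k + 2 = (k + 1) + 1 from rfl, replicate_succ', replicate_succ']
    simp
  rw [hr, ← append_assoc] at h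
  have := (append_inj' h rfl).2
  simp at this

lemma getLast?_of_ne_D {l : List DyckStep} (hl : l ≠ []) (h : l.getLast? ≠ some D) :
    l.getLast? = some U := by
  rw [getLast?_eq_getLast hl] at h ⊢
  rcases (l.getLast hl).dichotomy with h' | h' <;> simp_all

lemma getLast?_of_ne_U {l : List DyckStep} (hl : l ≠ []) (h : l.getLast? ≠ some U) :
    l.getLast? = some D := by
  rw [getLast?_eq_getLast hl] at h ⊢
  rcases (l.getLast hl).dichotomy with h' | h' <;> simp_all

/-- Remark: at most two consecutive applications of `op3` are possible. -/
theorem stmt19 (n : ℕ) (hn : 3 ≤ n) (P : DyckWord) (hP : P.semilength = n)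
    (h1 : EndsInUnitPyramid P.toList)
    (h2 : EndsInUnitPyramid (op3 P.toList)) :
    ¬ EndsInUnitPyramid (op3 (op3 P.toList)) := by
  obtain ⟨W, hW0, hPl⟩ := h1
  have hWnil : W.toList ≠ [] := DyckWord.toList_ne_nil.mpr hW0
  obtain ⟨V, m, hWdec, hV⟩ := exists_decomp D W.toList
  -- V is nonempty
  have hVnil : V ≠ [] := by
    rintro rfl
    have hc := W.count_U_eq_count_D
    rw [hWdec] at hc hWnil
    simp [count_replicate] at hc
    simp [hc] at hWnil
  -- last letter of W is D, so m ≥ 1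
  have hWD : W.toList.getLast? = some D := by
    rw [getLast?_eq_getLast hWnil, W.getLast_eq_D hWnil]
  have hm : 1 ≤ m := by
    rcases Nat.eq_zero_or_pos m with h | h
    · subst h; simp only [replicate_zero, append_nil] at hWdec
      rw [hWdec] at hWD; exact absurd hWD hV
    · exact h
  obtain ⟨Sl, a, hVdec, hSl⟩ := exists_decomp U V
  have hVU : V.getLast? = some U := getLast?_of_ne_D hVnil hV
  have ha : 1 ≤ a := by
    rcases Nat.eq_zero_or_pos a with h | h
    · subst h; simp only [replicate_zero, append_nil] at hVdec
      rw [hVdec] at hVU; exact absurd hVU hSl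
    · exact h
  -- compute op3 P.toList
  have hd1 : P.toList.dropLast.dropLast = W.toList := by
    rw [hPl, show W.toList ++ [U, D] = (W.toList ++ [U]) ++ [D] by simp,
      dropLast_concat, dropLast_concat]
  have hop3 : op3 P.toList =
      U :: (Sl ++ (replicate (a - 1) U ++ (D :: U :: replicate m D))) := by
    simp only [op3]
    rw [hd1, hWdec, (stripD_eval V m hV).1, (stripD_eval V m hV).2, hVdec,
      (stripU_eval Sl a hSl).1, (stripU_eval Sl a hSl).2]
  -- m = 1, else op3 P ends in two D's
  have hm1 : m = 1 := by
    by_contra hne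
    have h2' := h2
    rw [hop3] at h2'
    have heq : U :: (Sl ++ (replicate (a - 1) U ++ (D :: U :: replicate m D))) =
        (U :: (Sl ++ (replicate (a - 1) U ++ [D, U]))) ++ replicate ((m - 2) + 2) D := by
      rw [show (m - 2) + 2 = m by omega]
      simp
    rw [heq] at h2'
    exact not_endsUD _ _ h2'
  subst hm1
  -- get W2 from h2 and deduce a = 1
  obtain ⟨W2, hW20, h2e⟩ := h2
  have hop3' : op3 P.toList = (U :: (Sl ++ (replicate (a - 1) U ++ [D]))) ++ [U, D] := by
    rw [hop3]; simp
  have hW2 : W2.toList = U :: (Sl ++ (replicate (a - 1) U ++ [D])) := by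
    have := (append_inj' (h2e.symm.trans hop3') rfl).1
    exact this
  have hc1 := W.count_U_eq_count_D
  rw [hWdec, hVdec] at hc1
  simp [count_append, count_replicate] at hc1
  have hc2 := W2.count_U_eq_count_D
  rw [hW2] at hc2
  simp [count_append, count_replicate] at hc2
  have hpre := W.count_D_le_count_U Sl.length
  rw [hWdec, hVdec, append_assoc, take_left] at hpre
  have ha1 : a = 1 := by omega
  subst ha1
  -- Sl is nonempty, else n = 2
  have hSlnil : Sl ≠ [] := by
    rintro rfl
    have hsemi : P.semilength = 2 := by
      have : P.toList = [U, D, U, D] := by rw [hPl, hWdec, hVdec]; simp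
      simp [DyckWord.semilength, this]
    omega
  have hSlD : Sl.getLast? = some D := getLast?_of_ne_U hSlnil hSl
  obtain ⟨S0, k, hSdec, hS0⟩ := exists_decomp D Sl
  have hk : 1 ≤ k := by
    rcases Nat.eq_zero_or_pos k with h | h
    · subst h; simp only [replicate_zero, append_nil] at hSdec
      rw [hSdec] at hSlD; exact absurd hSlD hS0
    · exact h
  have hS0nil : S0 ≠ [] := by
    rintro rfl
    rw [hSdec] at hc1
    simp [count_replicate] at hc1
    omega
  have hUS0 : (U :: S0).getLast? ≠ some D := by
    obtain ⟨x, S0', rfl⟩ := exists_cons_of_ne_nil hS0nil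
    rw [getLast?_cons_cons]; exact hS0
  -- compute op3 (op3 P.toList)
  have hd2 : (op3 P.toList).dropLast.dropLast = (U :: S0) ++ replicate (k + 1) D := by
    rw [hop3]
    simp only [Nat.sub_self, replicate_zero, nil_append, replicate_one]
    rw [show U :: (Sl ++ [D, U, D]) = ((U :: (Sl ++ [D])) ++ [U]) ++ [D] by simp,
      dropLast_concat, dropLast_concat, hSdec, replicate_succ']
    simp
  have key : op3 (op3 P.toList) =
      (U :: (stripU (U :: S0) ++ (replicate (trailU (U :: S0) - 1) U ++ [D, U]))) ++
        replicate (k + 1) D := by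
    rw [op3_eq, hd2, (stripD_eval (U :: S0) (k + 1) hUS0).1, (stripD_eval (U :: S0) (k + 1) hUS0).2]
    simp
  rw [key, show k + 1 = (k - 1) + 2 by omega]
  exact not_endsUD _ _
end
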